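/- arXiv:1311.2361 — 4 statements merged into one kernel-verified Lean document; each statement's English description precedes it below -/
import Mathlib

section
/- Let A be an n-by-n complex matrix and 1 ≤ j ≤ a(A). Then A, A², …, A^j are all partial isometries if and only if there exist positive integers n₁, …, n_j and a nonnegative integer m with n₁ + ⋯ + n_j + m = n, matrices A_ℓ of size n_ℓ-by-n_{ℓ+1} (1 ≤ ℓ ≤ j − 1) with A_ℓ*A_ℓ = I_{n_{ℓ+1}}, an n_j-by-m matrix B and an m-by-m matrix C with B*B + C*C = I_m, such that A is unitarily similar to the block matrix A′ on ℂ^{n₁} ⊕ ⋯ ⊕ ℂ^{n_j} ⊕ ℂ^m whose (ℓ, ℓ+1) block is A_ℓ for 1 ≤ ℓ ≤ j − 1, whose (j, j+1) block is B, whose (j+1, j+1) block is C, and all of whose other blocks are zero. Moreover, in this case n₁ = dim ker A, n_ℓ = dim ker A^ℓ − dim ker A^{ℓ−1} for 2 ≤ ℓ ≤ j, and m = rank A^j. -/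
open Matrix

noncomputable section

/-- An `ι`-by-`ι` complex matrix `A` is a *partial isometry* if `‖Ax‖ = ‖x‖` for every
vector `x` in the orthogonal complement of `ker A` (Euclidean structure). -/
def Matrix.IsPartialIsometry {ι : Type*} [Fintype ι] [DecidableEq ι]
    (A : Matrix ι ι ℂ) : Prop :=
  ∀ x ∈ (LinearMap.ker (Matrix.toEuclideanLin A))ᗮ, ‖Matrix.toEuclideanLin A x‖ = ‖x‖

/-- The *power partial isometry index* `p(A)`: the supremum (in `ℕ∞`, possibly `⊤`) of the
nonnegative integers `j` such that `I, A, A², …, A^j` are all partial isometries. -/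
def Matrix.pIndex {ι : Type*} [Fintype ι] [DecidableEq ι] (A : Matrix ι ι ℂ) : ℕ∞ :=
  sSup ((↑) '' {j : ℕ | ∀ i ≤ j, (A ^ i).IsPartialIsometry})

/-- The *ascent* `a(A)`: the smallest nonnegative integer `k` with `ker A^k = ker A^(k+1)`. -/
def Matrix.ascent {ι : Type*} [Fintype ι] [DecidableEq ι] (A : Matrix ι ι ℂ) : ℕ :=
  sInf {k : ℕ | LinearMap.ker (Matrix.toEuclideanLin (A ^ k)) =
    LinearMap.ker (Matrix.toEuclideanLin (A ^ (k + 1)))}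

/-- `A` is unitarily similar to `B` (allowing different, necessarily equipotent, index types):
`B = U* A U` for some unitary `U`. -/
def Matrix.UnitarilySimilarTo {ι κ : Type*} [Fintype ι] [Fintype κ] [DecidableEq ι]
    [DecidableEq κ] (A : Matrix ι ι ℂ) (B : Matrix κ κ ℂ) : Prop :=
  ∃ U : Matrix ι κ ℂ, Uᴴ * U = 1 ∧ U * Uᴴ = 1 ∧ B = Uᴴ * A * U

/-- The `q`-by-`q` nilpotent Jordan block `J_q`. -/
def JordanBlock (q : ℕ) : Matrix (Fin q) (Fin q) ℂ :=
  Matrix.of fun a b => if (b : ℕ) = (a : ℕ) + 1 then 1 else 0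

/-- `A` is of class `S_n`: a contraction whose eigenvalues all have moduli strictly
less than `1` and with `rank (1 - A*A) = 1`. -/
def Matrix.IsClassSn {n : ℕ} (A : Matrix (Fin n) (Fin n) ℂ) : Prop :=
  (∀ x : EuclideanSpace ℂ (Fin n), ‖Matrix.toEuclideanLin A x‖ ≤ ‖x‖) ∧
  (∀ z ∈ spectrum ℂ A, ‖z‖ < 1) ∧
  (1 - Aᴴ * A).rank = 1

/-!
Write `K_i = ker A^i`. If `A, …, A^j` are partial isometries, then `A` maps `K_{i+1}ᗮ` into
`K_iᗮ` for `i < j`: decomposing `A x = y + z` along `K_i ⊕ K_iᗮ`, the norms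
`‖z‖ = ‖A^i (A x)‖ = ‖x‖ = ‖A x‖` force `y = 0`. Hence in an orthonormal basis adapted to the
layers `K_ℓᗮ ⊓ K_{ℓ+1}` (`ℓ < j`) and `K_jᗮ` the matrix `A'` of `A` maps each layer into the
previous one, except the top layer, and `A'* A'` is the projection `D_1` onto the layers of
index `≥ 1`; given the zero pattern, this Gram identity is exactly the block conditions, and the
layers are nonzero because `j ≤ a(A)`. Conversely, the zero pattern gives `D_i A' = A' D_{i+1}`
for the diagonal projections `D_i` onto the layers of index `≥ i`, so `(A'^i)* A'^i = D_i` by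
induction; a matrix `M` is a partial isometry iff `M* M` is idempotent, and `rank A^i = rank D_i`
yields the dimensions.
-/

open Module
open scoped InnerProductSpace

namespace LinearMap

variable {𝕜 E F : Type*} [RCLike 𝕜] [NormedAddCommGroup E] [InnerProductSpace 𝕜 E]
  [NormedAddCommGroup F] [InnerProductSpace 𝕜 F]

def IsPartialIsometry (T : E →ₗ[𝕜] F) : Prop :=
  ∀ x ∈ (ker T)ᗮ, ‖T x‖ = ‖x‖

theorem IsPartialIsometry.inner_map_map {T : E →ₗ[𝕜] F} (hT : T.IsPartialIsometry) {x y : E}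
    (hx : x ∈ (ker T)ᗮ) (hy : y ∈ (ker T)ᗮ) : ⟪T x, T y⟫_𝕜 = ⟪x, y⟫_𝕜 :=
  LinearIsometry.inner_map_map ⟨T ∘ₗ (ker T)ᗮ.subtype, fun v => hT v v.2⟩ ⟨x, hx⟩ ⟨y, hy⟩

variable [FiniteDimensional 𝕜 E] [FiniteDimensional 𝕜 F]

theorem IsPartialIsometry.adjoint_apply_apply {T : E →ₗ[𝕜] F} (hT : T.IsPartialIsometry)
    {x : E} (hx : x ∈ (ker T)ᗮ) : adjoint T (T x) = x := by
  refine ext_inner_right 𝕜 fun z => ?_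
  obtain ⟨z₁, hz₁, z₂, hz₂, rfl⟩ := Submodule.exists_add_mem_mem_orthogonal (K := ker T) z
  rw [adjoint_inner_left, map_add, mem_ker.mp hz₁, zero_add, inner_add_right,
    hT.inner_map_map hx hz₂, Submodule.inner_left_of_mem_orthogonal hz₁ hx, zero_add]

theorem isPartialIsometry_iff_isIdempotentElem (T : E →ₗ[𝕜] F) :
    T.IsPartialIsometry ↔ IsIdempotentElem (adjoint T ∘ₗ T) := by
  constructor
  · intro hT
    refine LinearMap.ext fun y => ?_
    obtain ⟨y₁, hy₁, y₂, hy₂, rfl⟩ := Submodule.exists_add_mem_mem_orthogonal (K := ker T) y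
    simp only [End.mul_apply, comp_apply, map_add, mem_ker.mp hy₁, map_zero, zero_add,
      hT.adjoint_apply_apply hy₂]
  · intro hS x hx
    set S := adjoint T ∘ₗ T
    -- `x - S x` lies in `ker S`, and `ker S = ker T` because `‖T v‖² = ⟪v, S v⟫`.
    have hker : x - S x ∈ ker T := by
      have hS0 : S (x - S x) = 0 := by
        rw [map_sub, ← End.mul_apply, hS.eq, sub_self]
      rw [mem_ker, ← inner_self_eq_zero (𝕜 := 𝕜), ← adjoint_inner_right]
      exact (congrArg (inner 𝕜 (x - S x)) hS0).trans (inner_zero_right _)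
    have hinner : ⟪T x, T x⟫_𝕜 = ⟪x, x⟫_𝕜 := by
      have := Submodule.inner_right_of_mem_orthogonal hker hx
      rw [inner_sub_left, sub_eq_zero] at this
      rw [← adjoint_inner_left]
      exact this.symm
    rw [← pow_left_inj₀ (norm_nonneg _) (norm_nonneg _) two_ne_zero, norm_sq_eq_re_inner (𝕜 := 𝕜),
      norm_sq_eq_re_inner (𝕜 := 𝕜), hinner]

end LinearMap

namespace Matrix

open LinearMap

theorem conjTranspose_mul_mul_conj {ι κ : Type*} [Fintype ι] [DecidableEq ι] [Fintype κ]
    {U : Matrix ι κ ℂ} (hU : U * Uᴴ = 1) (X Y : Matrix ι ι ℂ) :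
    Uᴴ * X * U * (Uᴴ * Y * U) = Uᴴ * (X * Y) * U := by
  simp only [Matrix.mul_assoc]
  rw [← Matrix.mul_assoc U, hU, Matrix.one_mul]

section

variable {ι κ : Type*} [Fintype ι] [DecidableEq ι] [Fintype κ] [DecidableEq κ]

theorem isPartialIsometry_iff_isIdempotentElem (M : Matrix ι ι ℂ) :
    M.IsPartialIsometry ↔ IsIdempotentElem (Mᴴ * M) := by
  have hS : toEuclideanLin (Mᴴ * M) = adjoint (toEuclideanLin M) ∘ₗ toEuclideanLin M := by
    rw [toLpLin_mul_same, toEuclideanLin_conjTranspose_eq_adjoint]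
  rw [IsPartialIsometry, ← LinearMap.IsPartialIsometry,
    LinearMap.isPartialIsometry_iff_isIdempotentElem, ← hS, IsIdempotentElem, IsIdempotentElem,
    End.mul_eq_comp, ← toLpLin_mul_same, (toLpLin 2 2).injective.eq_iff]

theorem isPartialIsometry_toEuclideanLin_pow {A : Matrix ι ι ℂ} {j : ℕ}
    (h : ∀ i, 1 ≤ i → i ≤ j → (A ^ i).IsPartialIsometry) {i : ℕ} (hi : i ≤ j) :
    (toEuclideanLin A ^ i).IsPartialIsometry := by
  rcases Nat.eq_zero_or_pos i with rfl | hi₀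
  · exact fun x _ => by simp
  · rw [← toLpLin_pow]
    exact h i hi₀ hi

theorem ker_pow_ne_ker_pow_succ_of_lt_ascent {A : Matrix ι ι ℂ} {i : ℕ} (hi : i < A.ascent) :
    ker (toEuclideanLin A ^ i) ≠ ker (toEuclideanLin A ^ (i + 1)) := by
  rw [← toLpLin_pow, ← toLpLin_pow]
  exact fun h => absurd (Nat.sInf_le h) (not_le.mpr hi)

theorem rank_add_finrank_ker_toEuclideanLin (M : Matrix ι ι ℂ) :
    M.rank + finrank ℂ (ker (toEuclideanLin M)) = Fintype.card ι := by
  rw [rank_eq_finrank_range_toLin M (PiLp.basisFun 2 ℂ ι) (PiLp.basisFun 2 ℂ ι), ← toLpLin_eq_toLin,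
    finrank_range_add_finrank_ker, finrank_euclideanSpace]

theorem unitarilySimilarTo_toMatrixOrthonormal (A : Matrix ι ι ℂ)
    (b : OrthonormalBasis κ ℂ (EuclideanSpace ℂ ι)) :
    A.UnitarilySimilarTo (toMatrixOrthonormal b (toEuclideanLin A)) := by
  let e := (EuclideanSpace.basisFun ι ℂ).toBasis
  have hU₁ : (e.toMatrix b)ᴴ * e.toMatrix b = 1 :=
    (EuclideanSpace.basisFun ι ℂ).toMatrix_orthonormalBasis_conjTranspose_mul_self b
  have hinv : b.toBasis.toMatrix e = (e.toMatrix b)ᴴ := by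
    have hflip : e.toMatrix b * b.toBasis.toMatrix e = 1 := by
      simpa using e.toMatrix_mul_toMatrix_flip b.toBasis
    rw [← Matrix.one_mul (b.toBasis.toMatrix e), ← hU₁, Matrix.mul_assoc, hflip, Matrix.mul_one]
  have hA : LinearMap.toMatrix e e (toEuclideanLin A) = A := by
    rw [toEuclideanLin_eq_toLin_orthonormal, LinearMap.toMatrix_toLin]
  refine ⟨e.toMatrix b, hU₁,
    (EuclideanSpace.basisFun ι ℂ).toMatrix_orthonormalBasis_self_mul_conjTranspose b, ?_⟩
  rw [← hinv]
  conv_rhs => rw [← hA]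
  simpa using (basis_toMatrix_mul_linearMap_toMatrix_mul_basis_toMatrix b.toBasis e b.toBasis e
    (toEuclideanLin A)).symm

namespace UnitarilySimilarTo

variable {A : Matrix ι ι ℂ} {B : Matrix κ κ ℂ}

theorem symm (h : A.UnitarilySimilarTo B) : B.UnitarilySimilarTo A := by
  obtain ⟨U, hU₁, hU₂, rfl⟩ := h
  refine ⟨Uᴴ, by rwa [conjTranspose_conjTranspose], by rwa [conjTranspose_conjTranspose], ?_⟩
  simp only [conjTranspose_conjTranspose, Matrix.mul_assoc, hU₂, Matrix.mul_one]
  rw [← Matrix.mul_assoc U, hU₂, Matrix.one_mul]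

theorem pow (h : A.UnitarilySimilarTo B) (k : ℕ) : (A ^ k).UnitarilySimilarTo (B ^ k) := by
  obtain ⟨U, hU₁, hU₂, rfl⟩ := h
  refine ⟨U, hU₁, hU₂, ?_⟩
  induction k with
  | zero => rw [pow_zero, pow_zero, Matrix.mul_one, hU₁]
  | succ k ih => rw [pow_succ, ih, conjTranspose_mul_mul_conj hU₂, pow_succ]

theorem conjTranspose_mul_self (h : A.UnitarilySimilarTo B) :
    (Aᴴ * A).UnitarilySimilarTo (Bᴴ * B) := by
  obtain ⟨U, hU₁, hU₂, rfl⟩ := h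
  refine ⟨U, hU₁, hU₂, ?_⟩
  rw [← conjTranspose_mul_mul_conj hU₂]
  simp only [conjTranspose_mul, conjTranspose_conjTranspose, Matrix.mul_assoc]

theorem isIdempotentElem (h : A.UnitarilySimilarTo B) (hA : IsIdempotentElem A) :
    IsIdempotentElem B := by
  obtain ⟨U, -, hU₂, rfl⟩ := h
  rw [IsIdempotentElem, conjTranspose_mul_mul_conj hU₂, hA.eq]

theorem isPartialIsometry_iff (h : A.UnitarilySimilarTo B) :
    A.IsPartialIsometry ↔ B.IsPartialIsometry := by
  simp only [isPartialIsometry_iff_isIdempotentElem]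
  exact ⟨h.conjTranspose_mul_self.isIdempotentElem, h.symm.conjTranspose_mul_self.isIdempotentElem⟩

theorem rank_le (h : A.UnitarilySimilarTo B) : B.rank ≤ A.rank := by
  obtain ⟨U, -, -, rfl⟩ := h
  exact (rank_mul_le_left _ _).trans (rank_mul_le_right _ _)

theorem rank_eq (h : A.UnitarilySimilarTo B) : A.rank = B.rank :=
  le_antisymm h.symm.rank_le h.rank_le

end UnitarilySimilarTo

end

theorem conjTranspose_submatrix_mul_submatrix {α β γ δ R : Type*} [Fintype α] [Fintype γ]
    [NonUnitalNonAssocSemiring R] [StarRing R] (M : Matrix α β R) {f : γ → α}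
    (hf : Function.Injective f) (g : δ → β) (hM : ∀ p ∉ Set.range f, ∀ b, M p (g b) = 0) :
    (M.submatrix f g)ᴴ * M.submatrix f g = (Mᴴ * M).submatrix g g := by
  ext b b'
  simp only [mul_apply, submatrix_apply, conjTranspose_apply]
  exact Fintype.sum_of_injective f hf _ _ (fun p hp => by simp [hM p hp b]) fun _ => rfl

section Graded

variable {ι κ R : Type*} (deg : κ → ℕ) (j : ℕ)

/-- The zero pattern of the block matrix `A'` of the theorem, for the grading `deg` of the
basis into levels `0, …, j`. -/
def IsShift [Zero R] (M : Matrix κ κ R) : Prop :=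
  ∀ p q, M p q ≠ 0 → deg q = deg p + 1 ∨ (deg p = j ∧ deg q = j)

variable {deg j}

theorem IsShift.apply_eq_zero_of_deg_eq_zero [Zero R] {M : Matrix κ κ R} (hM : IsShift deg j M)
    (hj : 0 < j) {q : κ} (hq : deg q = 0) (p : κ) : M p q = 0 := by
  by_contra h
  have := hM p q h
  omega

theorem IsShift.conjTranspose_mul_self_apply_of_deg_ne [Fintype κ] [NonUnitalNonAssocSemiring R]
    [StarRing R] {M : Matrix κ κ R} (hM : IsShift deg j M) (hdeg : ∀ q, deg q ≤ j) {q q' : κ}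
    (hqq' : deg q ≠ deg q') : (Mᴴ * M) q q' = 0 := by
  refine Finset.sum_eq_zero fun p _ => ?_
  by_cases hq : M p q = 0
  · simp [hq]
  by_cases hq' : M p q' = 0
  · simp [hq']
  have := hM p q hq
  have := hM p q' hq'
  have := hdeg q
  have := hdeg q'
  omega

variable [DecidableEq κ]

variable (deg) in
def levelProj [Zero R] [One R] (i : ℕ) : Matrix κ κ R :=
  diagonal fun q => if i ≤ deg q then 1 else 0

theorem levelProj_zero [Zero R] [One R] : (levelProj deg 0 : Matrix κ κ R) = 1 := by
  simp [levelProj, ← diagonal_one]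

theorem levelProj_submatrix_eq_one [DecidableEq ι] [Zero R] [One R] {i : ℕ} {g : ι → κ}
    (hg : Function.Injective g) (hdeg : ∀ b, i ≤ deg (g b)) :
    (levelProj deg i : Matrix κ κ R).submatrix g g = 1 := by
  rw [levelProj, submatrix_diagonal _ _ hg, ← diagonal_one]
  exact congrArg diagonal (funext fun b => if_pos (hdeg b))

variable [Fintype κ]

theorem levelProj_mul_levelProj [Semiring R] {i i' : ℕ} (h : i ≤ i') :
    levelProj (R := R) deg i * levelProj deg i' = levelProj deg i' := by
  unfold levelProj
  rw [diagonal_mul_diagonal]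
  congr with q
  split_ifs <;> first | omega | simp

theorem IsShift.levelProj_mul [Semiring R] {M : Matrix κ κ R} (hM : IsShift deg j M) {i : ℕ}
    (hi : i < j) : levelProj deg i * M = M * levelProj deg (i + 1) := by
  ext p q
  rw [levelProj, levelProj, diagonal_mul, mul_diagonal]
  by_cases hpq : M p q = 0
  · simp [hpq]
  · have := hM p q hpq
    split_ifs <;> first | omega | simp

theorem IsShift.conjTranspose_pow_mul_pow [Semiring R] [StarRing R] {M : Matrix κ κ R}
    (hM : IsShift deg j M) (hgram : Mᴴ * M = levelProj deg 1) {i : ℕ} (hi : i ≤ j) :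
    (M ^ i)ᴴ * M ^ i = levelProj deg i := by
  induction i with
  | zero => rw [pow_zero, conjTranspose_one, Matrix.one_mul, levelProj_zero]
  | succ i ih =>
    calc (M ^ (i + 1))ᴴ * M ^ (i + 1) = Mᴴ * ((M ^ i)ᴴ * M ^ i * M) := by
          simp only [pow_succ, conjTranspose_mul, Matrix.mul_assoc]
      _ = levelProj deg (i + 1) := by
          rw [ih (by omega), hM.levelProj_mul (by omega), ← Matrix.mul_assoc, hgram,
            levelProj_mul_levelProj (by omega)]

theorem rank_levelProj (i : ℕ) :
    (levelProj deg i : Matrix κ κ ℂ).rank = Fintype.card {q // i ≤ deg q} := by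
  rw [levelProj, rank_diagonal]
  exact Fintype.card_congr (Equiv.subtypeEquivRight fun q => by split_ifs <;> simp [*])

variable {M : Matrix κ κ ℂ}

theorem isPartialIsometry_of_conjTranspose_mul_self_eq_levelProj {i : ℕ}
    (h : Mᴴ * M = levelProj deg i) : M.IsPartialIsometry := by
  rw [isPartialIsometry_iff_isIdempotentElem, h]
  exact levelProj_mul_levelProj le_rfl

open scoped ComplexOrder in
theorem IsShift.rank_pow (hM : IsShift deg j M) (hgram : Mᴴ * M = levelProj deg 1) {i : ℕ}
    (hi : i ≤ j) : (M ^ i).rank = Fintype.card {q // i ≤ deg q} := by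
  rw [← rank_conjTranspose_mul_self, hM.conjTranspose_pow_mul_pow hgram hi, rank_levelProj]

theorem IsShift.finrank_ker_pow_of_unitarilySimilarTo [Fintype ι] [DecidableEq ι]
    {A : Matrix ι ι ℂ} (hsim : A.UnitarilySimilarTo M) (hcard : Fintype.card κ = Fintype.card ι)
    (hM : IsShift deg j M) (hgram : Mᴴ * M = levelProj deg 1) {i : ℕ} (hi : i ≤ j) :
    finrank ℂ (ker (toEuclideanLin (A ^ i))) = Fintype.card {q // deg q < i} := by
  have hnullity := rank_add_finrank_ker_toEuclideanLin (A ^ i)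
  have hcompl := Fintype.card_subtype_compl fun q => deg q < i
  have := Fintype.card_subtype_le fun q => deg q < i
  rw [(hsim.pow i).rank_eq, hM.rank_pow hgram hi] at hnullity
  simp only [not_lt] at hcompl
  omega

end Graded

end Matrix

abbrev BlockIndex {j : ℕ} (ns : Fin j → ℕ) (m : ℕ) : Type :=
  (Σ ℓ : Fin j, Fin (ns ℓ)) ⊕ Fin m

namespace BlockIndex

open Matrix

variable {j : ℕ} {ns : Fin j → ℕ} {m : ℕ} {R : Type*}

def level : BlockIndex ns m → ℕ
  | .inl p => p.1
  | .inr _ => j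

theorem level_le (q : BlockIndex ns m) : level q ≤ j := by
  rcases q with ⟨ℓ, _⟩ | _
  exacts [ℓ.isLt.le, le_rfl]

theorem card_eq : Fintype.card (BlockIndex ns m) = ∑ ℓ, ns ℓ + m := by
  simp [Fintype.card_sigma]

theorem card_level_eq (ℓ : Fin j) : Fintype.card {q : BlockIndex ns m // level q = ℓ} = ns ℓ := by
  rw [Fintype.card_subtype, Finset.card_filter, Fintype.sum_sum_type, Fintype.sum_sigma]
  simp [level, ℓ.isLt.ne', Fin.val_inj]

theorem card_level_lt_succ (ℓ : Fin j) :
    Fintype.card {q : BlockIndex ns m // level q < ℓ + 1} =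
      Fintype.card {q : BlockIndex ns m // level q < ℓ} + ns ℓ := by
  rw [← card_level_eq (ns := ns) (m := m) ℓ, ← Fintype.card_subtype_or_disjoint]
  · exact Fintype.card_congr (Equiv.subtypeEquivRight fun q => by omega)
  · exact fun P hP hP' q hq => by have := hP q hq; have := hP' q hq; simp_all

theorem card_level_ge_top : Fintype.card {q : BlockIndex ns m // j ≤ level q} = m := by
  rw [Fintype.card_subtype, Finset.card_filter, Fintype.sum_sum_type, Fintype.sum_sigma]
  simp [level, fun i : Fin j => not_le.mpr i.isLt]

theorem isShift_level_iff [Zero R] (A' : Matrix (BlockIndex ns m) (BlockIndex ns m) R) :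
    IsShift level j A' ↔
      (∀ (ℓ ℓ' : Fin j) (a : Fin (ns ℓ)) (b : Fin (ns ℓ')), (ℓ' : ℕ) ≠ (ℓ : ℕ) + 1 →
          A' (.inl ⟨ℓ, a⟩) (.inl ⟨ℓ', b⟩) = 0) ∧
      (∀ (ℓ : Fin j), (ℓ : ℕ) ≠ j - 1 → ∀ (a : Fin (ns ℓ)) (b : Fin m),
          A' (.inl ⟨ℓ, a⟩) (.inr b) = 0) ∧
      (∀ (a : Fin m) (ℓ : Fin j) (b : Fin (ns ℓ)), A' (.inr a) (.inl ⟨ℓ, b⟩) = 0) := by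
  refine ⟨fun hA => ⟨fun ℓ ℓ' a b hℓ => ?_, fun ℓ hℓ a b => ?_, fun a ℓ b => ?_⟩, ?_⟩
  all_goals first
    | (by_contra h; have := hA _ _ h; simp only [level] at this; omega)
    | skip
  rintro ⟨hz₁, hz₂, hz₃⟩ (⟨ℓ, a⟩ | a) (⟨ℓ', b⟩ | b) h <;> by_contra hc <;> apply h
  · exact hz₁ ℓ ℓ' a b (by simp only [level] at hc; omega)
  · exact hz₂ ℓ (by simp only [level] at hc; omega) a b
  · exact hz₃ a ℓ' b
  · simp [level] at hc

section Blocks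

variable (A' : Matrix (BlockIndex ns m) (BlockIndex ns m) R)

def shiftBlock (ℓ : Fin j) (h : (ℓ : ℕ) + 1 < j) : Matrix (Fin (ns ℓ)) (Fin (ns ⟨ℓ + 1, h⟩)) R :=
  A'.submatrix (fun a => .inl ⟨ℓ, a⟩) (fun b => .inl ⟨⟨ℓ + 1, h⟩, b⟩)

def lastBlock (hj : 0 < j) : Matrix (Fin (ns ⟨j - 1, Nat.sub_lt hj Nat.one_pos⟩)) (Fin m) R :=
  A'.submatrix (fun a => .inl ⟨⟨j - 1, Nat.sub_lt hj Nat.one_pos⟩, a⟩) .inr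

def cornerBlock : Matrix (Fin m) (Fin m) R :=
  A'.submatrix .inr .inr

variable [Semiring R] [StarRing R] {A'}

theorem conjTranspose_shiftBlock_mul_shiftBlock (hA' : IsShift level j A') (ℓ : Fin j)
    (h : (ℓ : ℕ) + 1 < j) :
    (shiftBlock A' ℓ h)ᴴ * shiftBlock A' ℓ h =
      (A'ᴴ * A').submatrix (fun b => .inl ⟨⟨ℓ + 1, h⟩, b⟩) (fun b => .inl ⟨⟨ℓ + 1, h⟩, b⟩) := by
  refine conjTranspose_submatrix_mul_submatrix A' (fun a b hab => by simpa using hab) _ ?_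
  rintro p hp b
  by_contra hne
  rcases hA' _ _ hne with hlev | ⟨-, hlev⟩ <;>
    rcases p with ⟨ℓ', a⟩ | a <;> simp only [level] at hlev <;> try omega
  obtain rfl : ℓ' = ℓ := Fin.ext (by omega)
  exact hp ⟨a, rfl⟩

theorem conjTranspose_lastBlock_mul_add_conjTranspose_cornerBlock_mul (hA' : IsShift level j A')
    (hj : 0 < j) :
    (lastBlock A' hj)ᴴ * lastBlock A' hj + (cornerBlock A')ᴴ * cornerBlock A' =
      (A'ᴴ * A').submatrix .inr .inr := by
  have hrows : (lastBlock A' hj).fromRows (cornerBlock A') =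
      A'.submatrix (Sum.elim (fun a => .inl ⟨⟨j - 1, Nat.sub_lt hj Nat.one_pos⟩, a⟩) .inr)
        .inr := by
    ext (a | a) b <;> rfl
  rw [← fromCols_mul_fromRows, ← conjTranspose_fromRows_eq_fromCols_conjTranspose, hrows]
  refine conjTranspose_submatrix_mul_submatrix A' ?_ _ ?_
  · rintro (a | a) (b | b) hab <;> simp_all
  rintro (⟨ℓ, a⟩ | a) hp b
  · by_contra hne
    have hℓ : (ℓ : ℕ) = j - 1 := by
      rcases hA' _ _ hne with hlev | ⟨hlev, -⟩ <;> simp only [level] at hlev <;> omega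
    obtain rfl : ℓ = ⟨j - 1, Nat.sub_lt hj Nat.one_pos⟩ := Fin.ext hℓ
    exact hp ⟨.inl a, rfl⟩
  · exact absurd ⟨.inr a, rfl⟩ hp

theorem conjTranspose_mul_self_eq_levelProj_iff (hA' : IsShift level j A') (hj : 0 < j) :
    A'ᴴ * A' = levelProj level 1 ↔
      (∀ (ℓ : Fin j) (h : (ℓ : ℕ) + 1 < j), (shiftBlock A' ℓ h)ᴴ * shiftBlock A' ℓ h = 1) ∧
      (lastBlock A' hj)ᴴ * lastBlock A' hj + (cornerBlock A')ᴴ * cornerBlock A' = 1 := by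
  simp only [conjTranspose_shiftBlock_mul_shiftBlock hA',
    conjTranspose_lastBlock_mul_add_conjTranspose_cornerBlock_mul hA' hj]
  constructor
  · intro hG
    rw [hG]
    exact ⟨fun ℓ h => levelProj_submatrix_eq_one (fun b b' hbb' => by simpa using hbb')
        fun _ => by simp [level],
      levelProj_submatrix_eq_one Sum.inr_injective fun _ => by simp [level]; omega⟩
  rintro ⟨hshift, hlast⟩
  ext q q'
  by_cases hqq' : level q = level q'
  swap
  · rw [hA'.conjTranspose_mul_self_apply_of_deg_ne level_le hqq', levelProj,
      diagonal_apply_ne _ fun h => hqq' (congrArg level h)]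
  by_cases hq : level q = 0
  · simp [levelProj, diagonal_apply, hq, mul_apply, hA'.apply_eq_zero_of_deg_eq_zero hj hq]
  rcases q with ⟨ℓ, b⟩ | b <;> rcases q' with ⟨ℓ', b'⟩ | b' <;>
    simp only [level] at hqq' hq
  · obtain rfl : ℓ = ℓ' := Fin.ext hqq'
    obtain ⟨_ | k, hk⟩ := ℓ
    · simp at hq
    have := congrFun (congrFun (hshift ⟨k, by omega⟩ hk) b) b'
    simp only [submatrix_apply] at this
    simp [this, levelProj, diagonal_apply, one_apply, level]
  · have := ℓ.isLt; omega
  · have := ℓ'.isLt; omega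
  · have := congrFun (congrFun hlast b) b'
    simp only [submatrix_apply] at this
    simp [this, levelProj, diagonal_apply, one_apply, level, Nat.one_le_iff_ne_zero.mpr hq]

theorem isShift_and_conjTranspose_mul_self_eq_levelProj_of_blocks (hj : 0 < j)
    {As : ∀ (ℓ : Fin j) (h : (ℓ : ℕ) + 1 < j), Matrix (Fin (ns ℓ)) (Fin (ns ⟨ℓ + 1, h⟩)) R}
    {B : Matrix (Fin (ns ⟨j - 1, Nat.sub_lt hj Nat.one_pos⟩)) (Fin m) R}
    {C : Matrix (Fin m) (Fin m) R}
    (hAs : ∀ (ℓ : Fin j) (h : (ℓ : ℕ) + 1 < j), (As ℓ h)ᴴ * As ℓ h = 1)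
    (hBC : Bᴴ * B + Cᴴ * C = 1)
    (hA'As : ∀ (ℓ : Fin j) (h : (ℓ : ℕ) + 1 < j) a b,
      A' (.inl ⟨ℓ, a⟩) (.inl ⟨⟨ℓ + 1, h⟩, b⟩) = As ℓ h a b)
    (hz₁ : ∀ (ℓ ℓ' : Fin j) (a : Fin (ns ℓ)) (b : Fin (ns ℓ')), (ℓ' : ℕ) ≠ (ℓ : ℕ) + 1 →
      A' (.inl ⟨ℓ, a⟩) (.inl ⟨ℓ', b⟩) = 0)
    (hA'B : ∀ a b, A' (.inl ⟨⟨j - 1, Nat.sub_lt hj Nat.one_pos⟩, a⟩) (.inr b) = B a b)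
    (hz₂ : ∀ (ℓ : Fin j), (ℓ : ℕ) ≠ j - 1 → ∀ (a : Fin (ns ℓ)) (b : Fin m),
      A' (.inl ⟨ℓ, a⟩) (.inr b) = 0)
    (hA'C : ∀ a b, A' (.inr a) (.inr b) = C a b)
    (hz₃ : ∀ (a : Fin m) (ℓ : Fin j) (b : Fin (ns ℓ)), A' (.inr a) (.inl ⟨ℓ, b⟩) = 0) :
    IsShift level j A' ∧ A'ᴴ * A' = levelProj level 1 := by
  have hA' := (isShift_level_iff A').mpr ⟨hz₁, hz₂, hz₃⟩
  obtain rfl : As = shiftBlock A' := funext₂ fun ℓ h => (Matrix.ext (hA'As ℓ h)).symm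
  obtain rfl : B = lastBlock A' hj := (Matrix.ext hA'B).symm
  obtain rfl : C = cornerBlock A' := (Matrix.ext hA'C).symm
  exact ⟨hA', (conjTranspose_mul_self_eq_levelProj_iff hA' hj).mpr ⟨hAs, hBC⟩⟩

end Blocks

end BlockIndex

namespace LinearMap

open BlockIndex Matrix

variable {𝕜 E : Type*} [RCLike 𝕜] [NormedAddCommGroup E] [InnerProductSpace 𝕜 E]
  (T : E →ₗ[𝕜] E)

theorem ker_pow_le_ker_pow {a b : ℕ} (h : a ≤ b) : ker (T ^ a) ≤ ker (T ^ b) :=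
  T.iterateKer.monotone h

theorem apply_mem_ker_pow {k : ℕ} {x : E} (hx : x ∈ ker (T ^ (k + 1))) : T x ∈ ker (T ^ k) := by
  rwa [mem_ker, ← End.mul_apply, ← pow_succ]

variable [FiniteDimensional 𝕜 E] {T}

theorem apply_mem_orthogonal_ker_pow (hT : T.IsPartialIsometry) {k : ℕ}
    (hk : (T ^ k).IsPartialIsometry) (hk₁ : (T ^ (k + 1)).IsPartialIsometry) {x : E}
    (hx : x ∈ (ker (T ^ (k + 1)))ᗮ) : T x ∈ (ker (T ^ k))ᗮ := by
  obtain ⟨y, hy, z, hz, hyz⟩ := Submodule.exists_add_mem_mem_orthogonal (K := ker (T ^ k)) (T x)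
  have hTx : ‖T x‖ = ‖x‖ := by
    refine hT x (Submodule.orthogonal_le ?_ hx)
    simpa using T.ker_pow_le_ker_pow (Nat.le_add_left 1 k)
  have hz_norm : ‖z‖ = ‖x‖ := by
    rw [← hk z hz, ← hk₁ x hx, pow_succ, End.mul_apply, hyz, map_add, mem_ker.mp hy, zero_add]
  have hy0 : y = 0 := by
    have := norm_add_sq_eq_norm_sq_add_norm_sq_of_inner_eq_zero y z
      (Submodule.inner_right_of_mem_orthogonal hy hz)
    rw [← hyz, hTx, hz_norm] at this
    simpa using this
  rwa [hyz, hy0, zero_add]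

variable (T)

def layer (ℓ : ℕ) : Submodule 𝕜 E :=
  (ker (T ^ ℓ))ᗮ ⊓ ker (T ^ (ℓ + 1))

theorem finrank_ker_pow_eq_sum_finrank_layer (i : ℕ) :
    finrank 𝕜 (ker (T ^ i)) = ∑ ℓ ∈ Finset.range i, finrank 𝕜 (layer T ℓ) := by
  induction i with
  | zero => simp [End.one_eq_id]
  | succ i ih =>
    rw [Finset.sum_range_succ, ← ih, layer,
      Submodule.finrank_add_inf_finrank_orthogonal (T.ker_pow_le_ker_pow (Nat.le_add_right i 1))]

theorem finrank_layer_pos {ℓ : ℕ} (h : ker (T ^ ℓ) ≠ ker (T ^ (ℓ + 1))) :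
    0 < finrank 𝕜 (layer T ℓ) := by
  have hle := T.ker_pow_le_ker_pow (Nat.le_add_right ℓ 1)
  have := Submodule.finrank_add_inf_finrank_orthogonal hle
  by_contra h0
  exact h (Submodule.eq_of_le_of_finrank_le hle (by rw [layer] at h0; omega))

variable (j : ℕ)

abbrev LayerIndex : Type :=
  BlockIndex (fun ℓ : Fin j => finrank 𝕜 (layer T ℓ)) (finrank 𝕜 (ker (T ^ j))ᗮ)

def layerFamily : LayerIndex T j → E
  | .inl ⟨ℓ, a⟩ => stdOrthonormalBasis 𝕜 (layer T ℓ) a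
  | .inr a => stdOrthonormalBasis 𝕜 (ker (T ^ j))ᗮ a

theorem layerFamily_mem_orthogonal (p : LayerIndex T j) :
    layerFamily T j p ∈ (ker (T ^ level p))ᗮ := by
  rcases p with ⟨ℓ, a⟩ | a
  exacts [(stdOrthonormalBasis 𝕜 (layer T ℓ) a).2.1, (stdOrthonormalBasis 𝕜 _ a).2]

theorem layerFamily_mem_ker {p : LayerIndex T j} (hp : level p < j) :
    layerFamily T j p ∈ ker (T ^ (level p + 1)) := by
  rcases p with ⟨ℓ, a⟩ | a
  exacts [(stdOrthonormalBasis 𝕜 (layer T ℓ) a).2.2, absurd hp (lt_irrefl j)]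

theorem inner_layerFamily_eq_zero {p q : LayerIndex T j} (hpq : level p < level q) :
    ⟪layerFamily T j p, layerFamily T j q⟫_𝕜 = 0 :=
  Submodule.inner_right_of_mem_orthogonal
    (T.ker_pow_le_ker_pow hpq (layerFamily_mem_ker T j (hpq.trans_le (level_le q))))
    (layerFamily_mem_orthogonal T j q)

theorem orthonormal_layerFamily : Orthonormal 𝕜 (layerFamily T j) := by
  rw [orthonormal_iff_ite]
  intro p q
  rcases lt_trichotomy (level p) (level q) with h | h | h
  · rw [inner_layerFamily_eq_zero T j h, if_neg (ne_of_apply_ne level h.ne)]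
  · rcases p with ⟨ℓ, a⟩ | a <;> rcases q with ⟨ℓ', b⟩ | b <;> simp only [level] at h
    · obtain rfl : ℓ = ℓ' := Fin.ext h
      simp [layerFamily, ← Submodule.coe_inner, OrthonormalBasis.inner_eq_ite]
    · exact absurd h ℓ.isLt.ne
    · exact absurd h.symm ℓ'.isLt.ne
    · simp [layerFamily, ← Submodule.coe_inner, OrthonormalBasis.inner_eq_ite]
  · rw [inner_eq_zero_symm.mp (inner_layerFamily_eq_zero T j h),
      if_neg (ne_of_apply_ne level h.ne')]

theorem card_layerIndex : Fintype.card (LayerIndex T j) = finrank 𝕜 E := by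
  simp only [Fintype.card_sum, Fintype.card_sigma, Fintype.card_fin]
  rw [Fin.sum_univ_eq_sum_range (fun ℓ => finrank 𝕜 (layer T ℓ)),
    ← finrank_ker_pow_eq_sum_finrank_layer, Submodule.finrank_add_finrank_orthogonal]

def layerBasis : OrthonormalBasis (LayerIndex T j) 𝕜 E :=
  OrthonormalBasis.mk (orthonormal_layerFamily T j)
    ((orthonormal_layerFamily T j).linearIndependent.span_eq_top_of_card_eq_finrank'
      (card_layerIndex T j)).ge

theorem coe_layerBasis : ⇑(layerBasis T j) = layerFamily T j :=
  OrthonormalBasis.coe_mk _ _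

variable {T j}

theorem isShift_toMatrixOrthonormal_layerBasis (hT : ∀ i ≤ j, (T ^ i).IsPartialIsometry) :
    IsShift level j (toMatrixOrthonormal (layerBasis T j) T) := by
  intro p q hpq
  by_contra hcon
  apply hpq
  have := level_le p
  have := level_le q
  rw [toMatrixOrthonormal_apply_apply, coe_layerBasis]
  by_cases hq : level q < j ∧ level q ≤ level p
  · exact Submodule.inner_left_of_mem_orthogonal
      (T.ker_pow_le_ker_pow hq.2 (T.apply_mem_ker_pow (layerFamily_mem_ker T j hq.1)))
      (layerFamily_mem_orthogonal T j p)
  -- otherwise `q` sits at least two levels above `p`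
  obtain ⟨k, hk⟩ : ∃ k, level q = k + 1 ∧ level p + 1 ≤ k := ⟨level q - 1, by omega, by omega⟩
  have hTq : T (layerFamily T j q) ∈ (ker (T ^ k))ᗮ := by
    refine apply_mem_orthogonal_ker_pow (by simpa using hT 1 (by omega)) (hT k (by omega))
      (hT (k + 1) (by omega)) ?_
    simpa [hk.1] using layerFamily_mem_orthogonal T j q
  exact Submodule.inner_right_of_mem_orthogonal
    (T.ker_pow_le_ker_pow hk.2 (layerFamily_mem_ker T j (by omega))) hTq

theorem conjTranspose_toMatrixOrthonormal_layerBasis_mul_self (hT : T.IsPartialIsometry)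
    (hj : 0 < j) :
    (toMatrixOrthonormal (layerBasis T j) T)ᴴ * toMatrixOrthonormal (layerBasis T j) T =
      levelProj level 1 := by
  rw [← star_eq_conjTranspose, ← map_star, ← map_mul]
  ext p q
  rw [toMatrixOrthonormal_apply_apply, End.mul_apply, star_eq_adjoint, adjoint_inner_right,
    coe_layerBasis]
  have hker : ∀ p : LayerIndex T j, level p = 0 → T (layerFamily T j p) = 0 := fun p hp => by
    simpa [hp] using layerFamily_mem_ker T j (p := p) (by omega)
  have horth : ∀ p : LayerIndex T j, 1 ≤ level p → layerFamily T j p ∈ (ker T)ᗮ := fun p hp => by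
    simpa using Submodule.orthogonal_le (T.ker_pow_le_ker_pow hp) (layerFamily_mem_orthogonal T j p)
  by_cases hp : level p = 0
  · simp [hker p hp, levelProj, diagonal_apply, hp]
  by_cases hq : level q = 0
  · rw [hker q hq, inner_zero_right, levelProj, diagonal_apply_ne]
    rintro rfl
    exact hp hq
  rw [hT.inner_map_map (horth p (by omega)) (horth q (by omega)),
    orthonormal_iff_ite.mp (orthonormal_layerFamily T j), levelProj, diagonal_apply]
  split_ifs <;> first | rfl | omega

end LinearMap

open BlockIndex LinearMap

/-- Indices are `0`-based: `ns ⟨ℓ, _⟩` is the paper's `n_{ℓ+1}` and `As ℓ _` its `A_{ℓ+1}`. -/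
theorem pow_isPartialIsometry_iff_blockForm (n : ℕ) (A : Matrix (Fin n) (Fin n) ℂ)
    (j : ℕ) (hj : 0 < j) (hja : j ≤ A.ascent) :
    ((∀ i : ℕ, 1 ≤ i → i ≤ j → (A ^ i).IsPartialIsometry) ↔
      ∃ (ns : Fin j → ℕ) (m : ℕ), (∀ ℓ, 0 < ns ℓ) ∧ (∑ ℓ : Fin j, ns ℓ) + m = n ∧
        ∃ (As : ∀ (ℓ : Fin j) (h : (ℓ : ℕ) + 1 < j),
            Matrix (Fin (ns ℓ)) (Fin (ns ⟨(ℓ : ℕ) + 1, h⟩)) ℂ)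
          (B : Matrix (Fin (ns ⟨j - 1, Nat.sub_lt hj Nat.one_pos⟩)) (Fin m) ℂ)
          (C : Matrix (Fin m) (Fin m) ℂ)
          (A' : Matrix ((Σ ℓ : Fin j, Fin (ns ℓ)) ⊕ Fin m)
            ((Σ ℓ : Fin j, Fin (ns ℓ)) ⊕ Fin m) ℂ),
          (∀ (ℓ : Fin j) (h : (ℓ : ℕ) + 1 < j), (As ℓ h)ᴴ * As ℓ h = 1) ∧
          (Bᴴ * B + Cᴴ * C = 1) ∧
          (∀ (ℓ : Fin j) (h : (ℓ : ℕ) + 1 < j) (a : Fin (ns ℓ))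
            (b : Fin (ns ⟨(ℓ : ℕ) + 1, h⟩)),
            A' (Sum.inl ⟨ℓ, a⟩) (Sum.inl ⟨⟨(ℓ : ℕ) + 1, h⟩, b⟩) = As ℓ h a b) ∧
          (∀ (ℓ ℓ' : Fin j) (a : Fin (ns ℓ)) (b : Fin (ns ℓ')), (ℓ' : ℕ) ≠ (ℓ : ℕ) + 1 →
            A' (Sum.inl ⟨ℓ, a⟩) (Sum.inl ⟨ℓ', b⟩) = 0) ∧
          (∀ (a : Fin (ns ⟨j - 1, Nat.sub_lt hj Nat.one_pos⟩)) (b : Fin m),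
            A' (Sum.inl ⟨⟨j - 1, Nat.sub_lt hj Nat.one_pos⟩, a⟩) (Sum.inr b) = B a b) ∧
          (∀ (ℓ : Fin j), (ℓ : ℕ) ≠ j - 1 → ∀ (a : Fin (ns ℓ)) (b : Fin m),
            A' (Sum.inl ⟨ℓ, a⟩) (Sum.inr b) = 0) ∧
          (∀ a b : Fin m, A' (Sum.inr a) (Sum.inr b) = C a b) ∧
          (∀ (a : Fin m) (ℓ : Fin j) (b : Fin (ns ℓ)), A' (Sum.inr a) (Sum.inl ⟨ℓ, b⟩) = 0) ∧
          A.UnitarilySimilarTo A')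
    ∧
    (∀ (ns : Fin j → ℕ) (m : ℕ), (∀ ℓ, 0 < ns ℓ) → (∑ ℓ : Fin j, ns ℓ) + m = n →
      ∀ (As : ∀ (ℓ : Fin j) (h : (ℓ : ℕ) + 1 < j),
            Matrix (Fin (ns ℓ)) (Fin (ns ⟨(ℓ : ℕ) + 1, h⟩)) ℂ)
          (B : Matrix (Fin (ns ⟨j - 1, Nat.sub_lt hj Nat.one_pos⟩)) (Fin m) ℂ)
          (C : Matrix (Fin m) (Fin m) ℂ)
          (A' : Matrix ((Σ ℓ : Fin j, Fin (ns ℓ)) ⊕ Fin m)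
            ((Σ ℓ : Fin j, Fin (ns ℓ)) ⊕ Fin m) ℂ),
        ((∀ (ℓ : Fin j) (h : (ℓ : ℕ) + 1 < j), (As ℓ h)ᴴ * As ℓ h = 1) ∧
          (Bᴴ * B + Cᴴ * C = 1) ∧
          (∀ (ℓ : Fin j) (h : (ℓ : ℕ) + 1 < j) (a : Fin (ns ℓ))
            (b : Fin (ns ⟨(ℓ : ℕ) + 1, h⟩)),
            A' (Sum.inl ⟨ℓ, a⟩) (Sum.inl ⟨⟨(ℓ : ℕ) + 1, h⟩, b⟩) = As ℓ h a b) ∧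
          (∀ (ℓ ℓ' : Fin j) (a : Fin (ns ℓ)) (b : Fin (ns ℓ')), (ℓ' : ℕ) ≠ (ℓ : ℕ) + 1 →
            A' (Sum.inl ⟨ℓ, a⟩) (Sum.inl ⟨ℓ', b⟩) = 0) ∧
          (∀ (a : Fin (ns ⟨j - 1, Nat.sub_lt hj Nat.one_pos⟩)) (b : Fin m),
            A' (Sum.inl ⟨⟨j - 1, Nat.sub_lt hj Nat.one_pos⟩, a⟩) (Sum.inr b) = B a b) ∧
          (∀ (ℓ : Fin j), (ℓ : ℕ) ≠ j - 1 → ∀ (a : Fin (ns ℓ)) (b : Fin m),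
            A' (Sum.inl ⟨ℓ, a⟩) (Sum.inr b) = 0) ∧
          (∀ a b : Fin m, A' (Sum.inr a) (Sum.inr b) = C a b) ∧
          (∀ (a : Fin m) (ℓ : Fin j) (b : Fin (ns ℓ)), A' (Sum.inr a) (Sum.inl ⟨ℓ, b⟩) = 0)) →
        A.UnitarilySimilarTo A' →
        (ns ⟨0, hj⟩ = Module.finrank ℂ (LinearMap.ker (Matrix.toEuclideanLin A)) ∧
         (∀ ℓ : Fin j, 1 ≤ (ℓ : ℕ) →
            ns ℓ =
              Module.finrank ℂ (LinearMap.ker (Matrix.toEuclideanLin (A ^ ((ℓ : ℕ) + 1)))) -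
                Module.finrank ℂ (LinearMap.ker (Matrix.toEuclideanLin (A ^ (ℓ : ℕ))))) ∧
         m = (A ^ j).rank)) := by
  refine ⟨⟨fun hpi => ?_, ?_⟩, ?_⟩
  · set T := toEuclideanLin A
    have hT : ∀ i ≤ j, (T ^ i).IsPartialIsometry :=
      fun _ => isPartialIsometry_toEuclideanLin_pow hpi
    set A' := toMatrixOrthonormal (layerBasis T j) T
    have hshift : IsShift level j A' := isShift_toMatrixOrthonormal_layerBasis hT
    obtain ⟨hAs, hBC⟩ := (conjTranspose_mul_self_eq_levelProj_iff hshift hj).mp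
      (conjTranspose_toMatrixOrthonormal_layerBasis_mul_self (by simpa using hT 1 hj) hj)
    obtain ⟨hz₁, hz₂, hz₃⟩ := (isShift_level_iff A').mp hshift
    refine ⟨_, _, fun ℓ => finrank_layer_pos T (ker_pow_ne_ker_pow_succ_of_lt_ascent
        (ℓ.isLt.trans_le hja)), ?_, shiftBlock A', lastBlock A' hj, cornerBlock A', A', hAs, hBC,
      fun _ _ _ _ => rfl, hz₁, fun _ _ => rfl, hz₂, fun _ _ => rfl, hz₃,
      unitarilySimilarTo_toMatrixOrthonormal A _⟩
    rw [← card_eq, card_layerIndex, finrank_euclideanSpace_fin]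
  · rintro ⟨ns, m, -, -, As, B, C, A', hAs, hBC, hA'As, hz₁, hA'B, hz₂, hA'C, hz₃, hsim⟩ i - hij
    obtain ⟨hshift, hgram⟩ := isShift_and_conjTranspose_mul_self_eq_levelProj_of_blocks hj
      hAs hBC hA'As hz₁ hA'B hz₂ hA'C hz₃
    exact (hsim.pow i).isPartialIsometry_iff.mpr
      (isPartialIsometry_of_conjTranspose_mul_self_eq_levelProj
        (hshift.conjTranspose_pow_mul_pow hgram hij))
  · rintro ns m - hsum As B C A' ⟨hAs, hBC, hA'As, hz₁, hA'B, hz₂, hA'C, hz₃⟩ hsim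
    obtain ⟨hshift, hgram⟩ := isShift_and_conjTranspose_mul_self_eq_levelProj_of_blocks hj
      hAs hBC hA'As hz₁ hA'B hz₂ hA'C hz₃
    have hker : ∀ i ≤ j, finrank ℂ (ker (toEuclideanLin (A ^ i))) =
        Fintype.card {q : BlockIndex ns m // level q < i} := fun i hi =>
      hshift.finrank_ker_pow_of_unitarilySimilarTo hsim (by simp [hsum]) hgram hi
    refine ⟨?_, fun ℓ _ => ?_, ?_⟩
    · rw [← pow_one A, hker 1 hj, card_level_lt_succ (m := m) ⟨0, hj⟩]
      simp
    · rw [hker _ ℓ.isLt, hker _ ℓ.isLt.le, card_level_lt_succ, Nat.add_sub_cancel_left]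
    · rw [(hsim.pow j).rank_eq, hshift.rank_pow hgram le_rfl, card_level_ge_top]
end
end

section
/- Let A be a noninvertible matrix of class S_n. Then a(A) equals the algebraic multiplicity of the eigenvalue 0 of A. -/
open Matrix

noncomputable section

/-!
Since `ker A ∩ ker (1 - A*A) = 0`, the kernel of `A` has dimension at most
`rank (1 - A*A) = 1`. Hence `dim ker A^(k+1) ≤ dim ker A^k + 1`, so the kernels of the powers of `A`
grow by exactly one dimension until they stabilise at the ascent `a`. The stable kernel `ker A^a` is
the generalized `0`-eigenspace, whose dimension is the algebraic multiplicity of `0`.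
-/

namespace Module.End

open LinearMap

variable {K V : Type*} [Field K] [AddCommGroup V] [Module K V]

def ascent (f : End K V) : ℕ :=
  sInf {k : ℕ | ker (f ^ k) = ker (f ^ (k + 1))}

theorem ker_pow_le_ker_pow_succ (f : End K V) (k : ℕ) : ker (f ^ k) ≤ ker (f ^ (k + 1)) :=
  pow_succ' f k ▸ ker_le_ker_comp _ _

variable [FiniteDimensional K V]

theorem finrank_ker_le_finrank_range_one_sub_mul (f g : End K V) :
    finrank K (ker f) ≤ finrank K (range (1 - g * f)) := by
  have hdisj : ker f ⊓ ker (1 - g * f) = ⊥ := by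
    rw [Submodule.eq_bot_iff]
    rintro x ⟨hfx, hx⟩
    simpa [mem_ker.mp hfx, sub_eq_zero, eq_comm] using hx
  have hsum := Submodule.finrank_sup_add_finrank_inf_eq (ker f) (ker (1 - g * f))
  have hle := Submodule.finrank_le (ker f ⊔ ker (1 - g * f))
  have hrn := finrank_range_add_finrank_ker (1 - g * f)
  rw [hdisj, finrank_bot] at hsum
  omega

theorem finrank_ker_pow_succ_le (f : End K V) (k : ℕ) :
    finrank K (ker (f ^ (k + 1))) ≤ finrank K (ker (f ^ k)) + finrank K (ker f) := by
  let g := (f ^ k).domRestrict (ker (f ^ (k + 1)))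
  have hker : finrank K (ker g) = finrank K (ker (f ^ k)) := by
    rw [ker_domRestrict]
    exact (Submodule.comapSubtypeEquivOfLe (f.ker_pow_le_ker_pow_succ k)).finrank_eq
  have hrange : range g ≤ ker f := by
    rintro _ ⟨x, rfl⟩
    simpa [g, pow_succ', mul_apply] using x.2
  have := finrank_range_add_finrank_ker g
  have := Submodule.finrank_mono hrange
  omega

theorem ker_pow_ascent_succ (f : End K V) : ker (f ^ f.ascent) = ker (f ^ (f.ascent + 1)) :=
  Nat.sInf_mem (s := {k | ker (f ^ k) = ker (f ^ (k + 1))})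
    ⟨_, (ker_pow_eq_ker_pow_finrank_of_le (Nat.le_succ _)).symm⟩

theorem ascent_le_finrank (f : End K V) : f.ascent ≤ finrank K V :=
  Nat.sInf_le (ker_pow_eq_ker_pow_finrank_of_le (Nat.le_succ _)).symm

theorem maxGenEigenspace_zero_eq_ker_pow_ascent (f : End K V) :
    f.maxGenEigenspace 0 = ker (f ^ f.ascent) := by
  rw [maxGenEigenspace_eq_genEigenspace_finrank, genEigenspace_nat, zero_smul, sub_zero,
    ker_pow_constant f.ker_pow_ascent_succ (finrank K V - f.ascent),
    Nat.add_sub_cancel' f.ascent_le_finrank]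

variable {f : End K V}

/-- Below the ascent each power strictly enlarges the kernel, by at most `dim ker f ≤ 1`. -/
theorem finrank_ker_pow_of_le_ascent (hf : finrank K (ker f) ≤ 1) {k : ℕ} (hk : k ≤ f.ascent) :
    finrank K (ker (f ^ k)) = k := by
  induction k with
  | zero => simp [one_eq_id]
  | succ k ih =>
    have hlt : ker (f ^ k) < ker (f ^ (k + 1)) :=
      (f.ker_pow_le_ker_pow_succ k).lt_of_ne (Nat.notMem_of_lt_sInf hk)
    have := Submodule.finrank_lt_finrank_of_lt hlt
    have := f.finrank_ker_pow_succ_le k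
    have := ih (Nat.le_of_succ_le hk)
    omega

theorem ascent_eq_natTrailingDegree_charpoly (hf : finrank K (ker f) ≤ 1) :
    f.ascent = f.charpoly.natTrailingDegree := by
  rw [← finrank_maxGenEigenspace_zero_eq, maxGenEigenspace_zero_eq_ker_pow_ascent,
    finrank_ker_pow_of_le_ascent hf le_rfl]

end Module.End

namespace Matrix

variable {𝕜 ι : Type*} [RCLike 𝕜] [Fintype ι] [DecidableEq ι]

theorem toEuclideanLin_mul (A B : Matrix ι ι 𝕜) :
    toEuclideanLin (A * B) = toEuclideanLin A * toEuclideanLin B := by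
  simp only [← coe_toEuclideanCLM_eq_toEuclideanLin, map_mul, ContinuousLinearMap.toLinearMap_mul]

theorem toEuclideanLin_pow (A : Matrix ι ι 𝕜) (k : ℕ) :
    toEuclideanLin (A ^ k) = toEuclideanLin A ^ k := by
  simp only [← coe_toEuclideanCLM_eq_toEuclideanLin, map_pow, ContinuousLinearMap.toLinearMap_pow]

theorem ascent_eq_ascent_toEuclideanLin {n : ℕ} (A : Matrix (Fin n) (Fin n) ℂ) :
    A.ascent = Module.End.ascent (toEuclideanLin A) := by
  simp only [Matrix.ascent, Module.End.ascent, toEuclideanLin_pow]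

theorem charpoly_toEuclideanLin (A : Matrix ι ι 𝕜) : (toEuclideanLin A).charpoly = A.charpoly :=
  charpoly_toLin A (PiLp.basisFun 2 𝕜 ι)

theorem finrank_ker_toEuclideanLin_le_rank_one_sub_mul (A B : Matrix ι ι 𝕜) :
    Module.finrank 𝕜 (LinearMap.ker (toEuclideanLin A)) ≤ (1 - B * A).rank := by
  rw [rank_eq_finrank_range_toLin _ (PiLp.basisFun 2 𝕜 ι) (PiLp.basisFun 2 𝕜 ι),
    ← toLpLin_eq_toLin, map_sub, toLpLin_one, toEuclideanLin_mul]
  exact Module.End.finrank_ker_le_finrank_range_one_sub_mul _ _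

end Matrix

theorem ascent_eq_rootMultiplicity_of_isClassSn_general (n : ℕ) (A : Matrix (Fin n) (Fin n) ℂ)
    (hA : A.IsClassSn) :
    A.ascent = Polynomial.rootMultiplicity 0 A.charpoly := by
  have hker : Module.finrank ℂ (LinearMap.ker (Matrix.toEuclideanLin A)) ≤ 1 :=
    hA.2.2 ▸ A.finrank_ker_toEuclideanLin_le_rank_one_sub_mul Aᴴ
  rw [Matrix.ascent_eq_ascent_toEuclideanLin,
    Module.End.ascent_eq_natTrailingDegree_charpoly hker, Matrix.charpoly_toEuclideanLin,
    Polynomial.rootMultiplicity_eq_natTrailingDegree']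

/-- **Proposition 3.1 (a).** If `A` is a noninvertible matrix of class `S_n`, then `a(A)`
equals the algebraic multiplicity of the eigenvalue `0` of `A`. -/
theorem ascent_eq_rootMultiplicity_of_isClassSn (n : ℕ) (A : Matrix (Fin n) (Fin n) ℂ)
    (hA : A.IsClassSn) (hni : ¬ IsUnit A) :
    A.ascent = Polynomial.rootMultiplicity 0 A.charpoly :=
  ascent_eq_rootMultiplicity_of_isClassSn_general n A hA
end
end

section
/- Let A′ be the n-by-n upper-triangular block matrix on ℂ^{n₁} ⊕ ⋯ ⊕ ℂ^{n_j} ⊕ ℂ^m whose (ℓ, ℓ+1) block is A_ℓ for 1 ≤ ℓ ≤ j − 1, whose (j, j+1) block is B, whose (j+1, j+1) block is C, and all of whose other blocks are zero, where A_ℓ*A_ℓ = I_{n_{ℓ+1}} for 1 ≤ ℓ ≤ j − 1 and B*B + C*C = I_m. Then for every integer ℓ ≥ 0, the kernel of A′^{j+ℓ} equals ℂ^{n₁} ⊕ ⋯ ⊕ ℂ^{n_j} ⊕ ker C^ℓ; in particular dim ker A′^{j+ℓ} = (n₁ + ⋯ + n_j) + dim ker C^ℓ. -/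
/-!
The vector `(x₁, …, x_j, y)` is mapped by `A'` to `(A₁x₂, …, A_{j-1}x_j, By, Cy)`: `A'` moves
each of the first `j` blocks one step towards the first and feeds `By` into the `j`-th. Hence
`A'^j` kills every vector with `y = 0`. Conversely, if `A'^j (x, y) = 0` then, since the `A_ℓ`
are injective, `B Cᵗ y = 0` for `t < j`, and also `Cʲ y = 0`; as `B*B + C*C = I` makes `(B, C)`
jointly injective, descending induction gives `y = 0`. Thus `ker A'^j = {y = 0}`, and since the
`y`-component of `A'^ℓ (x, y)` is `C^ℓ y`, `ker A'^(j+ℓ) = {C^ℓ y = 0}`.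
-/

open Matrix

noncomputable section

namespace Matrix

variable {R : Type*} [Semiring R] {ι κ κ' : Type*} [Fintype ι]

theorem eq_zero_of_mul_eq_one_of_mulVec_eq_zero [DecidableEq ι] [Fintype κ] {L : Matrix ι κ R}
    {M : Matrix κ ι R} (h : L * M = 1) {v : ι → R} (hv : M *ᵥ v = 0) : v = 0 := by
  rw [← one_mulVec v, ← h, ← mulVec_mulVec, hv, mulVec_zero]

theorem eq_zero_of_mulVec_eq_zero_of_mul_add_mul_eq_one [DecidableEq ι] [Fintype κ] [Fintype κ']
    {L : Matrix ι κ R} {B : Matrix κ ι R} {L' : Matrix ι κ' R} {C : Matrix κ' ι R}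
    (h : L * B + L' * C = 1) {z : ι → R} (hB : B *ᵥ z = 0) (hC : C *ᵥ z = 0) : z = 0 := by
  rw [← one_mulVec z, ← h, add_mulVec, ← mulVec_mulVec, ← mulVec_mulVec, hB, hC,
    mulVec_zero, mulVec_zero, add_zero]

theorem eq_zero_of_mulVec_pow_eq_zero [DecidableEq ι] [Fintype κ] {L : Matrix ι κ R}
    {B : Matrix κ ι R} {L' C : Matrix ι ι R} (h : L * B + L' * C = 1) :
    ∀ (N : ℕ) {z : ι → R}, (∀ t < N, B *ᵥ (C ^ t *ᵥ z) = 0) → C ^ N *ᵥ z = 0 → z = 0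
  | 0, z, _, hC => by rwa [pow_zero, one_mulVec] at hC
  | N + 1, z, hB, hC => by
    refine eq_zero_of_mulVec_eq_zero_of_mul_add_mul_eq_one h ?_
      (eq_zero_of_mulVec_pow_eq_zero h N (fun t ht => ?_) ?_)
    · simpa using hB 0 N.succ_pos
    · rw [mulVec_mulVec _ (C ^ t), ← pow_succ]
      exact hB (t + 1) (by omega)
    · rwa [mulVec_mulVec, ← pow_succ]

theorem mulVec_comp_inr [Fintype κ] {M : Matrix (ι ⊕ κ) (ι ⊕ κ) R} (hM : M.toBlocks₂₁ = 0)
    (v : ι ⊕ κ → R) : (M *ᵥ v) ∘ Sum.inr = M.toBlocks₂₂ *ᵥ (v ∘ Sum.inr) := by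
  rw [← fromBlocks_toBlocks M, hM, fromBlocks_mulVec]
  simp

theorem pow_mulVec_comp_inr [DecidableEq ι] [Fintype κ] [DecidableEq κ]
    {M : Matrix (ι ⊕ κ) (ι ⊕ κ) R} (hM : M.toBlocks₂₁ = 0) (k : ℕ) (v : ι ⊕ κ → R) :
    (M ^ k *ᵥ v) ∘ Sum.inr = M.toBlocks₂₂ ^ k *ᵥ (v ∘ Sum.inr) := by
  induction k with
  | zero => simp
  | succ k ih =>
    rw [pow_succ', ← mulVec_mulVec, mulVec_comp_inr hM, ih, mulVec_mulVec, ← pow_succ']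

theorem mem_ker_toEuclideanLin_iff {𝕜 ι κ : Type*} [RCLike 𝕜] [Fintype κ] [DecidableEq κ]
    (M : Matrix ι κ 𝕜) (x : EuclideanSpace 𝕜 κ) :
    x ∈ LinearMap.ker (toEuclideanLin M) ↔ M *ᵥ x.ofLp = 0 := by
  rw [LinearMap.mem_ker, toLpLin_apply, WithLp.toLp_eq_zero]

end Matrix

theorem finrank_eq_card_add_finrank_of_forall_mem_iff {𝕜 ι κ : Type*} [RCLike 𝕜] [Fintype ι]
    [Fintype κ] {S : Submodule 𝕜 (EuclideanSpace 𝕜 (ι ⊕ κ))}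
    {K : Submodule 𝕜 (EuclideanSpace 𝕜 κ)}
    (h : ∀ x, x ∈ S ↔ WithLp.toLp 2 (fun b => x (Sum.inr b)) ∈ K) :
    Module.finrank 𝕜 S = Fintype.card ι + Module.finrank 𝕜 K := by
  let e : ((ι → 𝕜) × K) ≃ₗ[𝕜] S :=
    { toFun := fun p => ⟨WithLp.toLp 2 (Sum.elim p.1 p.2.1.ofLp), (h _).2 p.2.2⟩
      map_add' := fun p q => Subtype.ext (PiLp.ext fun s => by cases s <;> rfl)
      map_smul' := fun c p => Subtype.ext (PiLp.ext fun s => by cases s <;> rfl)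
      invFun := fun x => (fun a => x.1 (Sum.inl a), ⟨_, (h _).1 x.2⟩)
      left_inv := fun _ => rfl
      right_inv := fun x => Subtype.ext (PiLp.ext fun s => by cases s <;> rfl) }
  rw [← e.finrank_eq, Module.finrank_prod, Module.finrank_fintype_fun_eq_card]

section BlockShift

variable {R : Type*} [Semiring R] {j m : ℕ} {ns : Fin j → ℕ}

structure IsBlockShiftForm (hj : 0 < j)
    (A' : Matrix ((Σ ℓ : Fin j, Fin (ns ℓ)) ⊕ Fin m) ((Σ ℓ : Fin j, Fin (ns ℓ)) ⊕ Fin m) R)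
    (As : ∀ (ℓ : Fin j) (h : (ℓ : ℕ) + 1 < j),
      Matrix (Fin (ns ℓ)) (Fin (ns ⟨(ℓ : ℕ) + 1, h⟩)) R)
    (B : Matrix (Fin (ns ⟨j - 1, Nat.sub_lt hj Nat.one_pos⟩)) (Fin m) R)
    (C : Matrix (Fin m) (Fin m) R) : Prop where
  mulVec_inl_of_succ_lt : ∀ v (ℓ : Fin j) (h : (ℓ : ℕ) + 1 < j) (a : Fin (ns ℓ)),
    (A' *ᵥ v) (Sum.inl ⟨ℓ, a⟩) = (As ℓ h *ᵥ fun b => v (Sum.inl ⟨⟨(ℓ : ℕ) + 1, h⟩, b⟩)) a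
  mulVec_inl_last : ∀ v (a : Fin (ns ⟨j - 1, Nat.sub_lt hj Nat.one_pos⟩)),
    (A' *ᵥ v) (Sum.inl ⟨⟨j - 1, Nat.sub_lt hj Nat.one_pos⟩, a⟩) = (B *ᵥ (v ∘ Sum.inr)) a
  toBlocks₂₁_eq_zero : A'.toBlocks₂₁ = 0
  toBlocks₂₂_eq : A'.toBlocks₂₂ = C

namespace IsBlockShiftForm

variable {hj : 0 < j}
  {A' : Matrix ((Σ ℓ : Fin j, Fin (ns ℓ)) ⊕ Fin m) ((Σ ℓ : Fin j, Fin (ns ℓ)) ⊕ Fin m) R}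
  {As : ∀ (ℓ : Fin j) (h : (ℓ : ℕ) + 1 < j), Matrix (Fin (ns ℓ)) (Fin (ns ⟨(ℓ : ℕ) + 1, h⟩)) R}
  {B : Matrix (Fin (ns ⟨j - 1, Nat.sub_lt hj Nat.one_pos⟩)) (Fin m) R}
  {C : Matrix (Fin m) (Fin m) R}

theorem of_entries
    (hblk₁ : ∀ (ℓ : Fin j) (h : (ℓ : ℕ) + 1 < j) (a : Fin (ns ℓ))
      (b : Fin (ns ⟨(ℓ : ℕ) + 1, h⟩)),
      A' (Sum.inl ⟨ℓ, a⟩) (Sum.inl ⟨⟨(ℓ : ℕ) + 1, h⟩, b⟩) = As ℓ h a b)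
    (hblk₂ : ∀ (ℓ ℓ' : Fin j) (a : Fin (ns ℓ)) (b : Fin (ns ℓ')), (ℓ' : ℕ) ≠ (ℓ : ℕ) + 1 →
      A' (Sum.inl ⟨ℓ, a⟩) (Sum.inl ⟨ℓ', b⟩) = 0)
    (hblk₃ : ∀ (a : Fin (ns ⟨j - 1, Nat.sub_lt hj Nat.one_pos⟩)) (b : Fin m),
      A' (Sum.inl ⟨⟨j - 1, Nat.sub_lt hj Nat.one_pos⟩, a⟩) (Sum.inr b) = B a b)
    (hblk₄ : ∀ (ℓ : Fin j), (ℓ : ℕ) ≠ j - 1 → ∀ (a : Fin (ns ℓ)) (b : Fin m),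
      A' (Sum.inl ⟨ℓ, a⟩) (Sum.inr b) = 0)
    (hblk₅ : ∀ a b : Fin m, A' (Sum.inr a) (Sum.inr b) = C a b)
    (hblk₆ : ∀ (a : Fin m) (ℓ : Fin j) (b : Fin (ns ℓ)), A' (Sum.inr a) (Sum.inl ⟨ℓ, b⟩) = 0) :
    IsBlockShiftForm hj A' As B C where
  mulVec_inl_of_succ_lt v ℓ h a := by
    simp only [mulVec, dotProduct, Fintype.sum_sum_type, hblk₄ ℓ (by omega), zero_mul,
      Finset.sum_const_zero, add_zero, ← Finset.univ_sigma_univ, Finset.sum_sigma]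
    rw [Finset.sum_eq_single_of_mem (⟨(ℓ : ℕ) + 1, h⟩ : Fin j) (Finset.mem_univ _)]
    · simp only [hblk₁]
    · intro ℓ' _ hne
      exact Finset.sum_eq_zero fun b _ => by
        rw [hblk₂ _ _ _ _ (fun hc => hne (Fin.ext hc)), zero_mul]
  mulVec_inl_last v a := by
    simp only [mulVec, dotProduct, Fintype.sum_sum_type, hblk₃, Function.comp_apply]
    rw [Finset.sum_eq_zero fun s _ => by rw [hblk₂ _ _ _ _ (by dsimp only; omega), zero_mul],
      zero_add]
  toBlocks₂₁_eq_zero := by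
    ext a ⟨ℓ, b⟩
    exact hblk₆ a ℓ b
  toBlocks₂₂_eq := by
    ext a b
    exact hblk₅ a b

theorem pow_mulVec_comp_inr (hA : IsBlockShiftForm hj A' As B C) (k : ℕ)
    (v : (Σ ℓ : Fin j, Fin (ns ℓ)) ⊕ Fin m → R) :
    (A' ^ k *ᵥ v) ∘ Sum.inr = C ^ k *ᵥ (v ∘ Sum.inr) := by
  rw [← hA.toBlocks₂₂_eq]
  exact Matrix.pow_mulVec_comp_inr hA.toBlocks₂₁_eq_zero k v

theorem pow_mulVec_inl_eq_zero (hA : IsBlockShiftForm hj A' As B C)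
    {v : (Σ ℓ : Fin j, Fin (ns ℓ)) ⊕ Fin m → R} (hv : v ∘ Sum.inr = 0) :
    ∀ (t : ℕ) (i : Fin j) (a : Fin (ns i)), j ≤ i + t → (A' ^ t *ᵥ v) (Sum.inl ⟨i, a⟩) = 0
  | 0, i, _, hi => absurd hi (by omega)
  | t + 1, i, a, hi => by
    rw [pow_succ', ← mulVec_mulVec]
    by_cases h : (i : ℕ) + 1 < j
    · rw [hA.mulVec_inl_of_succ_lt _ i h]
      have hnext : (fun b => (A' ^ t *ᵥ v) (Sum.inl ⟨⟨(i : ℕ) + 1, h⟩, b⟩)) = 0 :=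
        funext fun b => pow_mulVec_inl_eq_zero hA hv t _ b (by dsimp only; omega)
      rw [hnext, mulVec_zero, Pi.zero_apply]
    · obtain rfl : i = ⟨j - 1, Nat.sub_lt hj Nat.one_pos⟩ := Fin.ext (by dsimp only; omega)
      rw [hA.mulVec_inl_last, hA.pow_mulVec_comp_inr, hv, mulVec_zero, mulVec_zero,
        Pi.zero_apply]

theorem mulVec_comp_inr_eq_zero (hA : IsBlockShiftForm hj A' As B C)
    (hAs : ∀ (ℓ : Fin j) (h : (ℓ : ℕ) + 1 < j),
      ∃ L : Matrix (Fin (ns ⟨(ℓ : ℕ) + 1, h⟩)) (Fin (ns ℓ)) R, L * As ℓ h = 1)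
    {v : (Σ ℓ : Fin j, Fin (ns ℓ)) ⊕ Fin m → R} :
    ∀ (d : ℕ) (i : Fin j), (i : ℕ) + d + 1 = j →
      (∀ a, (A' ^ (d + 1) *ᵥ v) (Sum.inl ⟨i, a⟩) = 0) → B *ᵥ (v ∘ Sum.inr) = 0
  | 0, i, hi, hv => by
    obtain rfl : i = ⟨j - 1, Nat.sub_lt hj Nat.one_pos⟩ := Fin.ext (by dsimp only; omega)
    funext a
    simpa [hA.mulVec_inl_last] using hv a
  | d + 1, i, hi, hv => by
    have h : (i : ℕ) + 1 < j := by omega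
    obtain ⟨L, hL⟩ := hAs i h
    have hnext : (fun b => (A' ^ (d + 1) *ᵥ v) (Sum.inl ⟨⟨(i : ℕ) + 1, h⟩, b⟩)) = 0 := by
      refine eq_zero_of_mul_eq_one_of_mulVec_eq_zero hL (funext fun a => ?_)
      rw [Pi.zero_apply, ← hA.mulVec_inl_of_succ_lt, mulVec_mulVec, ← pow_succ']
      exact hv a
    exact mulVec_comp_inr_eq_zero hA hAs d ⟨(i : ℕ) + 1, h⟩ (by dsimp only; omega)
      (congrFun hnext)

theorem pow_mulVec_eq_zero_iff (hA : IsBlockShiftForm hj A' As B C)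
    (hAs : ∀ (ℓ : Fin j) (h : (ℓ : ℕ) + 1 < j),
      ∃ L : Matrix (Fin (ns ⟨(ℓ : ℕ) + 1, h⟩)) (Fin (ns ℓ)) R, L * As ℓ h = 1)
    {L : Matrix (Fin m) (Fin (ns ⟨j - 1, Nat.sub_lt hj Nat.one_pos⟩)) R}
    {L' : Matrix (Fin m) (Fin m) R} (hBC : L * B + L' * C = 1)
    {v : (Σ ℓ : Fin j, Fin (ns ℓ)) ⊕ Fin m → R} :
    A' ^ j *ᵥ v = 0 ↔ v ∘ Sum.inr = 0 := by
  constructor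
  · intro hv
    refine eq_zero_of_mulVec_pow_eq_zero hBC j (fun t ht => ?_) ?_
    · rw [← hA.pow_mulVec_comp_inr]
      refine hA.mulVec_comp_inr_eq_zero hAs (j - 1 - t) ⟨t, ht⟩ (by dsimp only; omega)
        fun a => ?_
      rw [mulVec_mulVec, ← pow_add, show j - 1 - t + 1 + t = j by omega, hv, Pi.zero_apply]
    · rw [← hA.pow_mulVec_comp_inr, hv]
      rfl
  · intro hv
    funext s
    rcases s with ⟨i, a⟩ | b
    · exact hA.pow_mulVec_inl_eq_zero hv j i a (by omega)
    · have hinr := congrFun (hA.pow_mulVec_comp_inr j v) b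
      rwa [hv, mulVec_zero] at hinr

theorem pow_add_mulVec_eq_zero_iff (hA : IsBlockShiftForm hj A' As B C)
    (hAs : ∀ (ℓ : Fin j) (h : (ℓ : ℕ) + 1 < j),
      ∃ L : Matrix (Fin (ns ⟨(ℓ : ℕ) + 1, h⟩)) (Fin (ns ℓ)) R, L * As ℓ h = 1)
    {L : Matrix (Fin m) (Fin (ns ⟨j - 1, Nat.sub_lt hj Nat.one_pos⟩)) R}
    {L' : Matrix (Fin m) (Fin m) R} (hBC : L * B + L' * C = 1) (ℓ : ℕ)
    {v : (Σ ℓ : Fin j, Fin (ns ℓ)) ⊕ Fin m → R} :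
    A' ^ (j + ℓ) *ᵥ v = 0 ↔ C ^ ℓ *ᵥ (v ∘ Sum.inr) = 0 := by
  rw [pow_add, ← mulVec_mulVec, hA.pow_mulVec_eq_zero_iff hAs hBC, hA.pow_mulVec_comp_inr]

end IsBlockShiftForm

end BlockShift

/-- For the block matrix `A'` on `ℂ^{n₁} ⊕ ⋯ ⊕ ℂ^{n_j} ⊕ ℂ^m` with superdiagonal blocks
`A₁, …, A_{j-1}` (with `A_ℓ* A_ℓ = I`), `(j, j+1)` block `B`, `(j+1, j+1)` block `C`
(with `B*B + C*C = I`), and all other blocks zero: for every `ℓ ≥ 0`, the kernel of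
`A'^(j+ℓ)` equals `ℂ^{n₁} ⊕ ⋯ ⊕ ℂ^{n_j} ⊕ ker C^ℓ` (i.e. membership is determined by the
`ℂ^m`-component lying in `ker C^ℓ`); in particular
`dim ker A'^(j+ℓ) = (n₁ + ⋯ + n_j) + dim ker C^ℓ`. -/
theorem ker_pow_of_blockForm (j m : ℕ) (hj : 0 < j) (ns : Fin j → ℕ)
    (A' : Matrix ((Σ ℓ : Fin j, Fin (ns ℓ)) ⊕ Fin m) ((Σ ℓ : Fin j, Fin (ns ℓ)) ⊕ Fin m) ℂ)
    (As : ∀ (ℓ : Fin j) (h : (ℓ : ℕ) + 1 < j),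
      Matrix (Fin (ns ℓ)) (Fin (ns ⟨(ℓ : ℕ) + 1, h⟩)) ℂ)
    (B : Matrix (Fin (ns ⟨j - 1, Nat.sub_lt hj Nat.one_pos⟩)) (Fin m) ℂ)
    (C : Matrix (Fin m) (Fin m) ℂ)
    (hAs : ∀ (ℓ : Fin j) (h : (ℓ : ℕ) + 1 < j), (As ℓ h)ᴴ * As ℓ h = 1)
    (hBC : Bᴴ * B + Cᴴ * C = 1)
    (hblk₁ : ∀ (ℓ : Fin j) (h : (ℓ : ℕ) + 1 < j) (a : Fin (ns ℓ))
      (b : Fin (ns ⟨(ℓ : ℕ) + 1, h⟩)),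
      A' (Sum.inl ⟨ℓ, a⟩) (Sum.inl ⟨⟨(ℓ : ℕ) + 1, h⟩, b⟩) = As ℓ h a b)
    (hblk₂ : ∀ (ℓ ℓ' : Fin j) (a : Fin (ns ℓ)) (b : Fin (ns ℓ')), (ℓ' : ℕ) ≠ (ℓ : ℕ) + 1 →
      A' (Sum.inl ⟨ℓ, a⟩) (Sum.inl ⟨ℓ', b⟩) = 0)
    (hblk₃ : ∀ (a : Fin (ns ⟨j - 1, Nat.sub_lt hj Nat.one_pos⟩)) (b : Fin m),
      A' (Sum.inl ⟨⟨j - 1, Nat.sub_lt hj Nat.one_pos⟩, a⟩) (Sum.inr b) = B a b)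
    (hblk₄ : ∀ (ℓ : Fin j), (ℓ : ℕ) ≠ j - 1 → ∀ (a : Fin (ns ℓ)) (b : Fin m),
      A' (Sum.inl ⟨ℓ, a⟩) (Sum.inr b) = 0)
    (hblk₅ : ∀ a b : Fin m, A' (Sum.inr a) (Sum.inr b) = C a b)
    (hblk₆ : ∀ (a : Fin m) (ℓ : Fin j) (b : Fin (ns ℓ)), A' (Sum.inr a) (Sum.inl ⟨ℓ, b⟩) = 0) :
    ∀ ℓ : ℕ,
      (∀ x : EuclideanSpace ℂ ((Σ ℓ' : Fin j, Fin (ns ℓ')) ⊕ Fin m),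
        x ∈ LinearMap.ker (Matrix.toEuclideanLin (A' ^ (j + ℓ))) ↔
          (WithLp.toLp 2 (fun b => x (Sum.inr b)) : EuclideanSpace ℂ (Fin m)) ∈
            LinearMap.ker (Matrix.toEuclideanLin (C ^ ℓ))) ∧
      Module.finrank ℂ (LinearMap.ker (Matrix.toEuclideanLin (A' ^ (j + ℓ)))) =
        (∑ ℓ' : Fin j, ns ℓ') +
          Module.finrank ℂ (LinearMap.ker (Matrix.toEuclideanLin (C ^ ℓ))) := by
  intro ℓ
  have hA : IsBlockShiftForm hj A' As B C :=
    .of_entries hblk₁ hblk₂ hblk₃ hblk₄ hblk₅ hblk₆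
  have hker : ∀ x : EuclideanSpace ℂ ((Σ ℓ' : Fin j, Fin (ns ℓ')) ⊕ Fin m),
      x ∈ LinearMap.ker (Matrix.toEuclideanLin (A' ^ (j + ℓ))) ↔
        (WithLp.toLp 2 (fun b => x (Sum.inr b)) : EuclideanSpace ℂ (Fin m)) ∈
          LinearMap.ker (Matrix.toEuclideanLin (C ^ ℓ)) := fun x => by
    rw [mem_ker_toEuclideanLin_iff, mem_ker_toEuclideanLin_iff]
    exact hA.pow_add_mulVec_eq_zero_iff (fun ℓ h => ⟨_, hAs ℓ h⟩) hBC ℓ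
  refine ⟨hker, ?_⟩
  rw [finrank_eq_card_add_finrank_of_forall_mem_iff hker, Fintype.card_sigma]
  simp only [Fintype.card_fin]

end
end

section
/- Let j ≥ 0 and n = 2j + 2. Let A be the n-by-n block matrix on ℂ² ⊕ ⋯ ⊕ ℂ² (j + 1 copies of ℂ²) whose (ℓ, ℓ+1) block is I₂ for 1 ≤ ℓ ≤ j − 1, whose (j, j+1) block is B = [[1, 0], [0, 1/√2]], whose (j+1, j+1) block is C = [[0, 1/√2], [0, 0]], and all of whose other blocks are zero. Then p(A) = j and a(A) = j + 2. -/
open Matrix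

noncomputable section

/-- The `n`-by-`n` (`n = 2j + 2`) block matrix on `j + 1` copies of `ℂ²` (the copies indexed by
`Fin (j + 1)`, so that block row/column `ℓ` of the paper is index `ℓ - 1` here) whose
`(ℓ, ℓ + 1)` block is `I₂` for `1 ≤ ℓ ≤ j - 1`, whose `(j, j + 1)` block is
`B = !![1, 0; 0, 1/√2]`, whose `(j + 1, j + 1)` block is `C = !![0, 1/√2; 0, 0]`, and all of
whose other blocks are zero. -/
noncomputable def exampleMatrix (j : ℕ) :
    Matrix (Fin (j + 1) × Fin 2) (Fin (j + 1) × Fin 2) ℂ :=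
  Matrix.of fun pa qb =>
    if (pa.1 : ℕ) = j ∧ (qb.1 : ℕ) = j then
      (!![0, 1 / (Real.sqrt 2 : ℂ); 0, 0]) pa.2 qb.2
    else if (qb.1 : ℕ) = (pa.1 : ℕ) + 1 then
      (if (qb.1 : ℕ) = j then (!![1, 0; 0, 1 / (Real.sqrt 2 : ℂ)]) pa.2 qb.2
       else (1 : Matrix (Fin 2) (Fin 2) ℂ) pa.2 qb.2)
    else 0

/-
Write a vector as blocks `x₀, …, x_j ∈ ℂ²`. The matrix `A` moves block `ℓ + 1` to block `ℓ`
for `ℓ + 1 < j` and sends the last block `x_j` to `B x_j` in block `j - 1` and `C x_j` in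
block `j`. As `B*B + C*C = 1`, `A` is isometric on vectors with `x₀ = 0`; hence for `i ≤ j` the
power `A^i` kills the blocks below `i` and is isometric on the others, so it is a partial
isometry. As `B C = C` and `C² = 0`, `A^(j+1) x` is `C x_j` put in block `0`, and `A^(j+2) = 0`.
So `A^(j+1)` is a nonzero strict contraction, which is never a partial isometry, and the kernels
of the powers of `A` stabilise exactly from `j + 2` on.
-/

namespace Matrix

variable {ι : Type*} [Fintype ι] [DecidableEq ι]

lemma isPartialIsometry_of_col_eq_zero {M : Matrix ι ι ℂ} (S : Set ι)
    (hcol : ∀ i ∈ S, M.col i = 0)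
    (hnorm : ∀ x : EuclideanSpace ℂ ι, (∀ i ∈ S, x i = 0) → ‖toEuclideanLin M x‖ = ‖x‖) :
    M.IsPartialIsometry := by
  refine fun x hx => hnorm x fun i hi => ?_
  have hker : EuclideanSpace.single i (1 : ℂ) ∈ LinearMap.ker (toEuclideanLin M) := by
    simp [toLpLin_apply, hcol i hi]
  simpa [EuclideanSpace.inner_single_left] using Submodule.inner_right_of_mem_orthogonal hker hx

lemma not_isPartialIsometry_of_norm_lt {M : Matrix ι ι ℂ} (hM : M ≠ 0)
    (hlt : ∀ x : EuclideanSpace ℂ ι, x ≠ 0 → ‖toEuclideanLin M x‖ < ‖x‖) :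
    ¬M.IsPartialIsometry := by
  intro hM'
  have hne : (LinearMap.ker (toEuclideanLin M))ᗮ ≠ ⊥ := by
    rwa [Ne, Submodule.orthogonal_eq_bot_iff, LinearMap.ker_eq_top,
      LinearEquiv.map_eq_zero_iff]
  obtain ⟨x, hx, hx₀⟩ := Submodule.exists_mem_ne_zero_of_ne_bot hne
  exact (hlt x hx₀).ne (hM' x hx)

lemma pIndex_eq_of_isPartialIsometry_pow {A : Matrix ι ι ℂ} {m : ℕ}
    (hle : ∀ i ≤ m, (A ^ i).IsPartialIsometry) (hsucc : ¬(A ^ (m + 1)).IsPartialIsometry) :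
    A.pIndex = m := by
  refine le_antisymm (sSup_le ?_) (le_sSup ⟨m, hle, rfl⟩)
  rintro _ ⟨n, hn, rfl⟩
  by_contra h
  exact hsucc (hn _ (by exact_mod_cast not_le.mp h))

lemma ascent_eq_of_pow_eq_zero {A : Matrix ι ι ℂ} {m : ℕ} (hm : A ^ m ≠ 0)
    (hm₁ : A ^ (m + 1) = 0) : A.ascent = m + 1 := by
  have hker : ∀ k, LinearMap.ker (toEuclideanLin (A ^ k)) = ⊤ ↔ A ^ k = 0 := fun k => by
    rw [LinearMap.ker_eq_top, LinearEquiv.map_eq_zero_iff]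
  have hup : ∀ k₁ k₂, k₁ ≤ k₂ → LinearMap.ker (toEuclideanLin (A ^ k₁)) =
      LinearMap.ker (toEuclideanLin (A ^ (k₁ + 1))) → LinearMap.ker (toEuclideanLin (A ^ k₂)) =
      LinearMap.ker (toEuclideanLin (A ^ (k₂ + 1))) := by
    intro k₁ k₂ hk h
    simp only [toLpLin_pow] at h ⊢
    obtain ⟨d, rfl⟩ := Nat.exists_eq_add_of_le hk
    rw [← Module.End.ker_pow_constant h, add_assoc, ← Module.End.ker_pow_constant h]
  refine (Nat.sInf_upward_closed_eq_succ_iff hup m).2 ⟨?_, ?_⟩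
  · show LinearMap.ker _ = LinearMap.ker _
    rw [(hker _).2 hm₁, (hker _).2 (by rw [pow_succ, hm₁, zero_mul])]
  · show LinearMap.ker _ ≠ LinearMap.ker _
    rw [(hker (m + 1)).2 hm₁, Ne, hker]
    exact hm

end Matrix

section

variable {j : ℕ}

lemma exampleMatrix_mulVec_apply (x : Fin (j + 1) × Fin 2 → ℂ) (p : Fin (j + 1)) (a : Fin 2) :
    (exampleMatrix j *ᵥ x) (p, a) =
      if h : p + 1 < j then x (⟨p + 1, by omega⟩, a)
      else if p + 1 = j then (if a = 0 then x (Fin.last j, 0) else (√2 : ℂ)⁻¹ * x (Fin.last j, 1))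
      else if a = 0 then (√2 : ℂ)⁻¹ * x (Fin.last j, 1) else 0 := by
  rw [mulVec, dotProduct, Fintype.sum_prod_type]
  by_cases h : (p : ℕ) + 1 < j
  · have hp : (p : ℕ) ≠ j := by omega
    rw [dif_pos h, Finset.sum_eq_single ⟨p + 1, by omega⟩]
    · fin_cases a <;> simp [exampleMatrix, hp, h.ne]
    · intro q _ hq
      have hq' : (q : ℕ) ≠ p + 1 := fun h => hq (Fin.ext h)
      simp [exampleMatrix, hq', hp]
    · simp
  rw [dif_neg h, Finset.sum_eq_single (Fin.last j)]
  · by_cases h' : (p : ℕ) + 1 = j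
    · have hp : (p : ℕ) ≠ j := by omega
      rw [if_pos h']
      fin_cases a <;> simp [exampleMatrix, hp, h']
    · have hp : (p : ℕ) = j := by omega
      rw [if_neg h']
      fin_cases a <;> simp [exampleMatrix, hp]
  · intro q _ hq
    have hq' : (q : ℕ) ≠ j := fun h => hq (Fin.ext h)
    simp [exampleMatrix, hq']
    omega
  · simp

lemma exampleMatrix_pow_mulVec_apply {k : ℕ} (hk : 1 ≤ k) (x : Fin (j + 1) × Fin 2 → ℂ)
    (p : Fin (j + 1)) (a : Fin 2) :
    (exampleMatrix j ^ k *ᵥ x) (p, a) =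
      if h : p + k < j then x (⟨p + k, by omega⟩, a)
      else if p + k = j then (if a = 0 then x (Fin.last j, 0) else (√2 : ℂ)⁻¹ * x (Fin.last j, 1))
      else if p + k = j + 1 ∧ a = 0 then (√2 : ℂ)⁻¹ * x (Fin.last j, 1) else 0 := by
  induction k, hk using Nat.le_induction generalizing p a with
  | base =>
    rw [pow_one, exampleMatrix_mulVec_apply]
    by_cases h : (p : ℕ) + 1 < j
    · simp [h]
    · by_cases h' : (p : ℕ) + 1 = j
      · simp [h']
      · have : (p : ℕ) + 1 = j + 1 := by omega
        simp [this]
  | succ k hk ih =>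
    have hlast : ∀ b, (exampleMatrix j ^ k *ᵥ x) (Fin.last j, b) =
        if k = 1 ∧ b = 0 then (√2 : ℂ)⁻¹ * x (Fin.last j, 1) else 0 := by
      intro b
      rw [ih]
      simp only [Fin.val_last]
      rw [dif_neg (by omega), if_neg (by omega)]
      simp
    rw [pow_succ', ← mulVec_mulVec, exampleMatrix_mulVec_apply]
    have hp := p.isLt
    rcases lt_trichotomy ((p : ℕ) + 1) j with h | h | h
    · have e : (p : ℕ) + 1 + k = p + (k + 1) := by omega
      simp only [dif_pos h, ih, e]
    · have h₁ : ¬(p : ℕ) + (k + 1) < j := by omega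
      have h₂ : (p : ℕ) + (k + 1) ≠ j := by omega
      have h₃ : (p : ℕ) + (k + 1) = j + 1 ↔ k = 1 := by omega
      fin_cases a <;> simp [h, h₁, h₂, h₃, hlast]
    · have h₁ : ¬(p : ℕ) + (k + 1) < j := by omega
      have h₂ : (p : ℕ) + (k + 1) ≠ j := by omega
      have h₃ : (p : ℕ) + (k + 1) ≠ j + 1 := by omega
      have h₄ : ¬(p : ℕ) + 1 < j := by omega
      have h₅ : (p : ℕ) + 1 ≠ j := by omega
      simp [h₁, h₂, h₃, h₄, h₅, hlast]

lemma sum_norm_sq_exampleMatrix_mulVec (x : Fin (j + 1) × Fin 2 → ℂ)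
    (hx : ∀ b, x (0, b) = 0) :
    ∑ i, ‖(exampleMatrix j *ᵥ x) i‖ ^ 2 = ∑ i, ‖x i‖ ^ 2 := by
  rcases j with _ | m
  · have : x = 0 := funext fun ⟨q, b⟩ => by rw [Fin.fin_one_eq_zero q, hx b, Pi.zero_apply]
    simp [this]
  set f : Fin (m + 2) → ℝ := fun p => ∑ a, ‖(exampleMatrix (m + 1) *ᵥ x) (p, a)‖ ^ 2
  set g : Fin (m + 2) → ℝ := fun q => ∑ b, ‖x (q, b)‖ ^ 2
  have hshift : ∀ p : Fin m, f p.castSucc.castSucc = g p.castSucc.succ := by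
    intro p
    have hp : (p.castSucc.castSucc : ℕ) + 1 < m + 1 := by simp
    simp only [f, g, exampleMatrix_mulVec_apply, dif_pos hp]
    rfl
  have hlast : f (Fin.last m).castSucc + f (Fin.last (m + 1)) = g (Fin.last (m + 1)) := by
    simp [f, g, exampleMatrix_mulVec_apply, mul_pow]
    ring
  have h0 : g 0 = 0 := by simp [g, hx]
  rw [Fintype.sum_prod_type, Fintype.sum_prod_type]
  change ∑ p, f p = ∑ q, g q
  rw [Fin.sum_univ_castSucc f, Fin.sum_univ_castSucc (fun p => f p.castSucc), Fin.sum_univ_succ g,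
    Fin.sum_univ_castSucc (fun q => g q.succ), add_assoc, hlast, h0, zero_add, Fin.succ_last]
  simp only [hshift]

lemma sum_norm_sq_exampleMatrix_pow_mulVec {k : ℕ} (hk : k ≤ j) (x : Fin (j + 1) × Fin 2 → ℂ)
    (hx : ∀ q : Fin (j + 1), (q : ℕ) < k → ∀ b, x (q, b) = 0) :
    ∑ i, ‖(exampleMatrix j ^ k *ᵥ x) i‖ ^ 2 = ∑ i, ‖x i‖ ^ 2 := by
  induction k generalizing x with
  | zero => simp
  | succ k ih =>
    rw [pow_succ, ← mulVec_mulVec, ih (by omega),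
      sum_norm_sq_exampleMatrix_mulVec x (hx 0 (by simp))]
    intro q hq b
    rw [exampleMatrix_mulVec_apply, dif_pos (by omega)]
    exact hx _ (by simp [hq]) b

lemma exampleMatrix_pow_mulVec_eq_zero {k : ℕ} (hk : k ≤ j) (x : Fin (j + 1) × Fin 2 → ℂ)
    (hx : ∀ q : Fin (j + 1), k ≤ q → ∀ b, x (q, b) = 0) :
    exampleMatrix j ^ k *ᵥ x = 0 := by
  rcases Nat.eq_zero_or_pos k with rfl | hk₀
  · funext ⟨q, b⟩
    simp [hx q (Nat.zero_le _) b]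
  funext ⟨p, a⟩
  have hlast : ∀ b, x (Fin.last j, b) = 0 := fun b => hx _ (by simp [hk]) b
  rw [exampleMatrix_pow_mulVec_apply hk₀]
  split_ifs
  · exact hx _ (Nat.le_add_left k p) a
  all_goals simp [hlast]

lemma exampleMatrix_pow_succ_mulVec (x : Fin (j + 1) × Fin 2 → ℂ) :
    exampleMatrix j ^ (j + 1) *ᵥ x = Pi.single (0, 0) ((√2 : ℂ)⁻¹ * x (Fin.last j, 1)) := by
  funext ⟨p, a⟩
  rw [exampleMatrix_pow_mulVec_apply (by omega), dif_neg (by omega), if_neg (by omega)]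
  by_cases hp : p = 0
  · subst hp
    by_cases ha : a = 0
    · subst ha
      rw [if_pos ⟨by simp, rfl⟩, Pi.single_eq_same]
    · rw [if_neg (fun h => ha h.2), Pi.single_eq_of_ne (by simp [ha])]
  · have : (p : ℕ) ≠ 0 := Fin.val_ne_zero_iff.mpr hp
    rw [if_neg (not_and_of_not_left _ (by omega)), Pi.single_apply, if_neg (by simp [hp])]

end

lemma exampleMatrix_pow_add_two (j : ℕ) : exampleMatrix j ^ (j + 2) = 0 := by
  refine ext_of_mulVec_single fun i => funext fun ⟨p, a⟩ => ?_
  rw [exampleMatrix_pow_mulVec_apply (by omega), dif_neg (by omega), if_neg (by omega),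
    if_neg (not_and_of_not_left _ (by omega)), zero_mulVec]
  rfl

lemma exampleMatrix_pow_succ_ne_zero (j : ℕ) : exampleMatrix j ^ (j + 1) ≠ 0 := by
  intro h
  have := exampleMatrix_pow_succ_mulVec (Pi.single (Fin.last j, 1) 1)
  rw [h, zero_mulVec, Pi.single_eq_same, mul_one, eq_comm, Pi.single_eq_zero_iff] at this
  simp at this

lemma isPartialIsometry_exampleMatrix_pow {j i : ℕ} (hi : i ≤ j) :
    (exampleMatrix j ^ i).IsPartialIsometry := by
  refine isPartialIsometry_of_col_eq_zero {q | (q.1 : ℕ) < i} (fun q hq => ?_) (fun x hx => ?_)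
  · rw [← mulVec_single_one]
    refine exampleMatrix_pow_mulVec_eq_zero hi _ fun p hp b => Pi.single_eq_of_ne ?_ _
    rintro rfl
    exact absurd hq (not_lt.mpr hp)
  · rw [EuclideanSpace.norm_eq, EuclideanSpace.norm_eq, toLpLin_apply, WithLp.ofLp_toLp,
      sum_norm_sq_exampleMatrix_pow_mulVec hi _ fun q hq b => hx (q, b) hq]

lemma not_isPartialIsometry_exampleMatrix_pow_succ (j : ℕ) :
    ¬(exampleMatrix j ^ (j + 1)).IsPartialIsometry := by
  refine not_isPartialIsometry_of_norm_lt (exampleMatrix_pow_succ_ne_zero j) fun x hx => ?_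
  rw [toLpLin_apply, exampleMatrix_pow_succ_mulVec, PiLp.toLp_single, PiLp.norm_single, norm_mul,
    norm_inv, Complex.norm_real, Real.norm_of_nonneg (Real.sqrt_nonneg 2)]
  calc (√2)⁻¹ * ‖x (Fin.last j, 1)‖ ≤ (√2)⁻¹ * ‖x‖ := by gcongr; exact PiLp.norm_apply_le x _
    _ < ‖x‖ := by
      have : 1 < √2 := by rw [Real.lt_sqrt zero_le_one]; norm_num
      have := norm_pos_iff.mpr hx
      rw [inv_mul_lt_iff₀ (by positivity)]
      nlinarith

/-- For any `j ≥ 0`, the example matrix above (of size `n = 2j + 2`) has `p(A) = j` and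
`a(A) = j + 2`. -/
theorem pIndex_ascent_exampleMatrix (j : ℕ) :
    (exampleMatrix j).pIndex = (j : ℕ∞) ∧ (exampleMatrix j).ascent = j + 2 :=
  ⟨pIndex_eq_of_isPartialIsometry_pow (fun _ => isPartialIsometry_exampleMatrix_pow)
      (not_isPartialIsometry_exampleMatrix_pow_succ j),
    ascent_eq_of_pow_eq_zero (exampleMatrix_pow_succ_ne_zero j) (exampleMatrix_pow_add_two j)⟩
end
end
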